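/- arXiv:1009.5327 — 3 statements merged into one kernel-verified Lean document; each statement's English description precedes it below -/
import Mathlib

section
/- Suppose Assumption 2 holds and let b(t)=t²/(Q̃(t)∨1) with b⁻¹(t)=inf{u≥0: t≤b(u)}. Then for any s∈(r̃,1) there exists a constant t₀≥1 such that: (a) Q̃(t)/tˢ is decreasing for all t≥t₀; (b) b⁻¹(t) ≤ t^{1/(2−s)} for all t≥t₀; (c) b⁻¹(ct) ≤ c^{1/(2−s)} b⁻¹(t) ≤ c b⁻¹(t) for all t≥t₀ and any c≥1; (d) b⁻¹(ct) ≥ c b⁻¹(t) for all t≥t₀ and any c≤1. Moreover, (e) lim_{t→∞} e^{−Q̃(t/b⁻¹(t))} Q̃(b⁻¹(t)) = 0. -/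
open MeasureTheory ProbabilityTheory Filter Finset
open scoped ENNReal NNReal Classical

noncomputable section

/-- Generalized right inverse `ω⁻¹(t) = inf {u ≥ 0 : t ≤ ω(u)}`. -/
def rInv (w : ℝ → ℝ) (t : ℝ) : ℝ := sInf {u : ℝ | 0 ≤ u ∧ t ≤ w u}

/-- `ω₁(t) = t² / (Q(t) ∨ 1)`. -/
def omega1 (Q : ℝ → ℝ) (t : ℝ) : ℝ := t ^ 2 / max (Q t) 1

/-- `ω₂(t) = t² / (Q(t) ∨ 1)²`. -/
def omega2 (Q : ℝ → ℝ) (t : ℝ) : ℝ := t ^ 2 / (max (Q t) 1) ^ 2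

/-- `K_r(x)`. -/
def Kr (Q : ℝ → ℝ) (r μ x : ℝ) : ℕ :=
  if r < 1 / 2 then (⌊(x - rInv (omega2 Q) x) / μ⌋).toNat
  else (⌊min (omega2 Q x) (x / (2 * μ))⌋).toNat

/-- `M(x) = ⌊(x − ω₁⁻¹(x))/μ⌋ ∨ 0`. -/
def Mfun (Q : ℝ → ℝ) (μ x : ℝ) : ℕ := (⌊(x - rInv (omega1 Q) x) / μ⌋).toNat

/-- `N(x) = ⌊(x − √(x log x))/μ⌋ ∨ 0`. -/
def Nfun (μ x : ℝ) : ℕ := (⌊(x - Real.sqrt (x * Real.log x)) / μ⌋).toNat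

/-- `κ = 2 + max {l : limsup Q(t)/t^{l/(l+1)} > 0}`. -/
def kappaOf (Q : ℝ → ℝ) : ℕ :=
  2 + sSup {l : ℕ |
    (0 : EReal) < Filter.limsup
      (fun t : ℝ => ((Q t / t ^ ((l : ℝ) / ((l : ℝ) + 1)) : ℝ) : EReal)) Filter.atTop}

/-- `Q_κ(t) = Σ_{j=2}^κ λ_j t^j / j!`. -/
def Qkpoly (lam : ℕ → ℝ) (κ : ℕ) (t : ℝ) : ℝ :=
  ∑ j ∈ Finset.Icc 2 κ, lam j * t ^ j / (j.factorial : ℝ)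

/-- The Cramér series coefficient `λ_j` expressed through the cumulants `γ`. -/
def cramerCoeff (γ : ℕ → ℝ) (j : ℕ) : ℝ :=
  ∑ m ∈ Fintype.piFinset (fun _ : Fin (j - 2) => Finset.range (j - 1)),
    if (∑ i : Fin (j - 2), ((i : ℕ) + 1) * m i) = j - 2 then
      ((j + (∑ i : Fin (j - 2), m i) - 2).factorial : ℝ) *
          (-1 : ℝ) ^ ((∑ i : Fin (j - 2), m i) + 1) *
        ∏ i : Fin (j - 2), (1 / ((m i).factorial : ℝ)) *
          (γ ((i : ℕ) + 3) / (((i : ℕ) + 2).factorial : ℝ)) ^ (m i)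
    else 0

/-- Standard normal density `Φ'`. -/
def stdPdf (z : ℝ) : ℝ := Real.exp (-z ^ 2 / 2) / Real.sqrt (2 * Real.pi)

/-- Standard normal distribution function `Φ`. -/
def stdCdf (x : ℝ) : ℝ := ∫ t in Set.Iic x, stdPdf t

/-- `E[ρ^{a(x,Z)} 1(σZ ≤ T)]` where `Z` is standard normal and
`a(x,z) = (x − σ z √(x/μ))/μ`. -/
def normInt (μ σ ρ x T : ℝ) : ℝ :=
  ∫ z in {z : ℝ | σ * z ≤ T}, ρ ^ ((x - σ * z * Real.sqrt (x / μ)) / μ) ∂(gaussianReal 0 1)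

/-- The approximation `Z_κ(ρ,x)`. -/
def Zk (Fbar Q : ℝ → ℝ) (lam : ℕ → ℝ) (κ : ℕ) (r μ σ ρ x : ℝ) : ℝ :=
  (∑ n ∈ Finset.Icc 1 (Kr Q r μ x), (1 - ρ) * ρ ^ n * (n : ℝ) * Fbar (x - (n : ℝ) * μ)) +
  if κ = 2 then normInt μ σ ρ x (Real.sqrt μ * rInv (omega1 Q) x / Real.sqrt x)
  else
    σ * Real.sqrt x / Real.sqrt (2 * Real.pi * μ) *
      (∑ n ∈ Finset.Icc (Mfun Q μ x + 1) (Nfun μ x),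
        (1 - ρ) * ρ ^ n *
          Real.exp ((n : ℝ) * Qkpoly lam κ ((x - (n : ℝ) * μ) / (σ * (n : ℝ)))) /
            (x - (n : ℝ) * μ)) +
    normInt μ σ ρ x (Real.sqrt (μ * Real.log x))

/-- `Λ_ρ(t)`. -/
def LamF (lam : ℕ → ℝ) (κ : ℕ) (μ σ ρ t : ℝ) : ℝ :=
  (1 - t) * Real.log ρ +
    ∑ i ∈ Finset.Icc 2 κ, ∑ j ∈ Finset.Icc 2 i,
      lam j * μ ^ j / ((j.factorial : ℝ) * σ ^ j) * ((i - 1).choose (i - j) : ℝ) * t ^ i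

/-- `P_κ(t) = Λ_ρ'(t) + log ρ` (the derivative of the polynomial part of `Λ_ρ`;
it does not depend on `ρ`). -/
def PkF (lam : ℕ → ℝ) (κ : ℕ) (μ σ : ℝ) : ℝ → ℝ :=
  deriv (fun t : ℝ => ∑ i ∈ Finset.Icc 2 κ, ∑ j ∈ Finset.Icc 2 i,
      lam j * μ ^ j / ((j.factorial : ℝ) * σ ^ j) * ((i - 1).choose (i - j) : ℝ) * t ^ i)

/-- `u(ρ)`, the smallest positive solution of `Λ_ρ'(t) = 0`. -/
def uOf (lam : ℕ → ℝ) (κ : ℕ) (μ σ ρ : ℝ) : ℝ :=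
  sInf {t : ℝ | 0 < t ∧ deriv (LamF lam κ μ σ ρ) t = 0}

/-- `w(ρ,x) = min {u(ρ), ω₁⁻¹(x)/x}`. -/
def wOf (Q : ℝ → ℝ) (lam : ℕ → ℝ) (κ : ℕ) (μ σ ρ x : ℝ) : ℝ :=
  min (uOf lam κ μ σ ρ) (rInv (omega1 Q) x / x)

/-- The approximation `A_κ(ρ,x)`. -/
def Ak (Fbar Q : ℝ → ℝ) (lam : ℕ → ℝ) (κ : ℕ) (r μ σ ρ x : ℝ) : ℝ :=
  (∑ n ∈ Finset.Icc 1 (Kr Q r μ x), (1 - ρ) * ρ ^ n * (n : ℝ) * Fbar (x - (n : ℝ) * μ)) +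
    Real.exp (x / μ * LamF lam κ μ σ ρ (wOf Q lam κ μ σ ρ x))

/-- `b(t) = t²/(Q̃(t) ∨ 1)`. -/
def bfun (Qt : ℝ → ℝ) (t : ℝ) : ℝ := t ^ 2 / max (Qt t) 1

/-- `C_n = min_{t ≥ √n} t (1/2 + n Q̃(t)/t²)`. -/
def Cmin (Qt : ℝ → ℝ) (n : ℕ) : ℝ :=
  sInf ((fun t : ℝ => t * (1 / 2 + (n : ℝ) * Qt t / t ^ 2)) '' Set.Ici (Real.sqrt n))

/-- `Q̃(t) = Q(σt + μ) − 2 log t`. -/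
def QtOf (Q : ℝ → ℝ) (μ σ : ℝ) (t : ℝ) : ℝ := Q (σ * t + μ) - 2 * Real.log t

/-- `q̃(t) = σ q(σt + μ) − 2/t`. -/
def qtOf (q : ℝ → ℝ) (μ σ : ℝ) (t : ℝ) : ℝ := σ * q (σ * t + μ) - 2 / t

/-- The function `J(y,n)`. -/
def Jfun (Vbar Qt : ℝ → ℝ) (lam : ℕ → ℝ) (κ : ℕ) (ε y : ℝ) (n : ℕ) : ℝ :=
  Real.sqrt n *
    ((∫ t in Set.Ioi (y - Real.sqrt n), Vbar t * stdPdf ((y - t) / Real.sqrt n)) +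
      (1 / Real.sqrt (2 * Real.pi)) *
        ∫ t in Set.Ioc (max (Real.sqrt n) (y - rInv (bfun Qt) (2 * (1 + ε) * n)))
            (y - Real.sqrt n),
          Vbar t * Real.exp ((n : ℝ) * Qkpoly lam κ ((y - t) / n)))

/-- The function `π̃(y,n)`. -/
def tildePi (lam : ℕ → ℝ) (κt : ℕ) (y : ℝ) (n : ℕ) : ℝ :=
  (if y ≤ Real.sqrt n then 1 - stdCdf (y / Real.sqrt n) else 0) +
  (if Real.sqrt n < y then
     (1 - stdCdf (y / Real.sqrt n)) *
       Real.exp (y ^ 2 / (2 * n) + (n : ℝ) * Qkpoly lam κt (y / n))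
   else 0)

/-- The function `π̂_κ(x,n)` (with `y = (x − nμ)/σ`). -/
def piHat (lam : ℕ → ℝ) (κ : ℕ) (μ σ x : ℝ) (n : ℕ) : ℝ :=
  if κ = 2 then stdCdf (-(((x - (n : ℝ) * μ) / σ) / Real.sqrt (x / μ)))
  else
    (if Nfun μ x < n then stdCdf (-(((x - (n : ℝ) * μ) / σ) / Real.sqrt (x / μ))) else 0) +
    (if n ≤ Nfun μ x then
       Real.sqrt x / (((x - (n : ℝ) * μ) / σ) * Real.sqrt (2 * Real.pi * μ)) *
         Real.exp ((n : ℝ) * Qkpoly lam κ (((x - (n : ℝ) * μ) / σ) / (n : ℝ)))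
     else 0)

/-- `h_κ(x)`: `ω₁⁻¹(x)` if `κ = 2`, `√(x log x)` if `κ > 2`. -/
def hkFun (Q : ℝ → ℝ) (κ : ℕ) (x : ℝ) : ℝ :=
  if κ = 2 then rInv (omega1 Q) x else Real.sqrt (x * Real.log x)

/-- The error term `E₁(ρ,x)`. -/
def E1fun (Q Qt : ℝ → ℝ) (lam : ℕ → ℝ) (κ : ℕ) (ε r μ σ ρ x : ℝ) : ℝ :=
  |∑' n : ℕ, if Kr Q r μ x + 1 ≤ n then
      (1 - ρ) * ρ ^ n * piHat lam κ μ σ x n *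
        ((if (x - (n : ℝ) * μ) / σ ≤ (1 + ε) * Cmin Qt n then (1 : ℝ) else 0) -
         (if Mfun Q μ x < n then (1 : ℝ) else 0))
    else 0|

/-- The error term `E₂(ρ,x)`. -/
def E2fun (Q : ℝ → ℝ) (lam : ℕ → ℝ) (κ : ℕ) (μ σ ρ x : ℝ) : ℝ :=
  if κ = 2 then
    |(∑' n : ℕ, if Mfun Q μ x + 1 ≤ n then (1 - ρ) * ρ ^ n * piHat lam κ μ σ x n else 0) -
      normInt μ σ ρ x (Real.sqrt μ * rInv (omega1 Q) x / Real.sqrt x)|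
  else
    |(∑' n : ℕ, if Nfun μ x + 1 ≤ n then (1 - ρ) * ρ ^ n * piHat lam κ μ σ x n else 0) -
      normInt μ σ ρ x (Real.sqrt (μ * Real.log x))|

/-- The error term `E₃(ρ,x)`. -/
def E3fun (Vbar Q Qt : ℝ → ℝ) (lam : ℕ → ℝ) (κ : ℕ) (ε r μ σ ρ x : ℝ) : ℝ :=
  ∑' n : ℕ, if Kr Q r μ x + 1 ≤ n ∧ (1 - ε) * Cmin Qt n < (x - (n : ℝ) * μ) / σ then
      (1 - ρ) * ρ ^ n * Jfun Vbar Qt lam κ ε ((x - (n : ℝ) * μ) / σ) n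
    else 0

-- ===== auxiliary lemmas =====

lemma gron_aux (Qt qt : ℝ → ℝ) (e : ℝ) (he : 0 < e) (c₀ : ℝ) (hc₀ : 1 ≤ c₀)
    (hQt : ∀ a b : ℝ, 1 ≤ a → a ≤ b → Qt b - Qt a = ∫ s in a..b, qt s)
    (hpt : ∀ τ, c₀ ≤ τ → 0 < Qt τ ∧ qt τ ≤ e * Qt τ / τ) :
    ∀ u v, c₀ ≤ u → u ≤ v → Qt v ≤ Qt u * (v / u) ^ e := by
  intro u v hu huv
  have hu1 : (1:ℝ) ≤ u := hc₀.trans hu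
  have hu0 : (0:ℝ) < u := by linarith
  have hQu : 0 < Qt u := (hpt u hu).1
  have hvu1 : (1:ℝ) ≤ v / u := (one_le_div hu0).2 huv
  have hrge1 : (1:ℝ) ≤ (v / u) ^ e := Real.one_le_rpow hvu1 he.le
  by_cases hint : IntervalIntegrable qt volume u v
  · -- continuous primitive case
    have hQeq : ∀ τ ∈ Set.Icc u v, Qt τ = Qt u + ∫ s in u..τ, qt s := by
      intro τ hτ
      have := hQt u τ hu1 hτ.1
      linarith
    have hcontP : ContinuousOn (fun τ => Qt u + ∫ s in u..τ, qt s) (Set.Icc u v) := by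
      have : ContinuousOn (fun τ => ∫ s in u..τ, qt s) (Set.uIcc u v) :=
        intervalIntegral.continuousOn_primitive_interval
          (by rw [Set.uIcc_of_le huv]
              exact (intervalIntegrable_iff_integrableOn_Icc_of_le huv).mp hint)
      exact continuousOn_const.add (by rwa [Set.uIcc_of_le huv] at this)
    have hQcont : ContinuousOn Qt (Set.Icc u v) := by
      exact ContinuousOn.congr hcontP (fun τ hτ => hQeq τ hτ) |>.congr (fun τ hτ => rfl)
    set φ : ℝ → ℝ := fun τ => Qt τ * (u / τ) ^ e with hφ
    have hφcont : ContinuousOn φ (Set.Icc u v) := by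
      apply hQcont.mul
      apply ContinuousOn.rpow_const
      · exact continuousOn_const.div continuousOn_id
          (fun τ hτ => ne_of_gt (lt_of_lt_of_le hu0 hτ.1))
      · exact fun τ hτ => Or.inr he.le
    obtain ⟨τs, hτs, hmax⟩ := isCompact_Icc.exists_isMaxOn (Set.nonempty_Icc.2 huv) hφcont
    set A := φ τs with hA
    have hτu : u ≤ τs := hτs.1
    have hτ0 : 0 < τs := lt_of_lt_of_le hu0 hτu
    have hAu : Qt u ≤ A := by
      have h := hmax (Set.left_mem_Icc.2 huv)
      simpa [hφ, div_self (ne_of_gt hu0), Real.one_rpow] using h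
    have hA0 : 0 < A := lt_of_lt_of_le hQu hAu
    have hmul1 : ∀ σ : ℝ, 0 < σ → (u / σ) ^ e * (σ / u) ^ e = 1 := by
      intro σ hσ
      rw [← Real.mul_rpow (by positivity) (by positivity)]
      rw [show u / σ * (σ / u) = 1 by field_simp]
      exact Real.one_rpow e
    have hptQ : ∀ σ ∈ Set.Icc u v, Qt σ ≤ A * (σ / u) ^ e := by
      intro σ hσ
      have hσ0 : 0 < σ := lt_of_lt_of_le hu0 hσ.1
      have h := hmax hσ
      have h' : Qt σ * (u / σ) ^ e ≤ A := h
      calc Qt σ = Qt σ * (u / σ) ^ e * (σ / u) ^ e := by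
                  rw [mul_assoc, hmul1 σ hσ0, mul_one]
        _ ≤ A * (σ / u) ^ e := by
            apply mul_le_mul_of_nonneg_right h' (Real.rpow_nonneg (by positivity) e)
    -- integral estimate on [u, τs]
    have hint' : IntervalIntegrable qt volume u τs :=
      hint.mono_set (by rw [Set.uIcc_of_le hτu, Set.uIcc_of_le huv]
                        exact Set.Icc_subset_Icc_right hτs.2)
    set g : ℝ → ℝ := fun σ => e * A / u ^ e * σ ^ (e - 1) with hg
    have hgint : IntervalIntegrable g volume u τs := by
      apply ContinuousOn.intervalIntegrable
      apply continuousOn_const.mul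
      apply ContinuousOn.rpow_const continuousOn_id
      intro σ hσ
      rw [Set.uIcc_of_le hτu] at hσ
      exact Or.inl (ne_of_gt (lt_of_lt_of_le hu0 hσ.1))
    have hqg : ∀ σ ∈ Set.Icc u τs, qt σ ≤ g σ := by
      intro σ hσ
      have hσ0 : 0 < σ := lt_of_lt_of_le hu0 hσ.1
      have h1 : qt σ ≤ e * Qt σ / σ := (hpt σ (hu.trans hσ.1)).2
      have h2 : Qt σ ≤ A * (σ / u) ^ e := hptQ σ ⟨hσ.1, hσ.2.trans hτs.2⟩
      have h3 : e * Qt σ / σ ≤ e * (A * (σ / u) ^ e) / σ := by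
        gcongr
      have h4 : e * (A * (σ / u) ^ e) / σ = g σ := by
        show e * (A * (σ / u) ^ e) / σ = e * A / u ^ e * σ ^ (e - 1)
        rw [Real.div_rpow hσ0.le hu0.le, Real.rpow_sub_one (ne_of_gt hσ0)]
        field_simp
      calc qt σ ≤ e * Qt σ / σ := h1
        _ ≤ e * (A * (σ / u) ^ e) / σ := h3
        _ = g σ := h4
    have hIle : (∫ s in u..τs, qt s) ≤ ∫ s in u..τs, g s :=
      intervalIntegral.integral_mono_on hτu hint' hgint hqg
    have hIg : (∫ s in u..τs, g s) = A * ((τs / u) ^ e - 1) := by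
      show (∫ s in u..τs, e * A / u ^ e * s ^ (e - 1)) = _
      rw [intervalIntegral.integral_const_mul,
        integral_rpow (Or.inl (by linarith : (-1:ℝ) < e - 1))]
      rw [show e - 1 + 1 = e by ring, Real.div_rpow hτ0.le hu0.le]
      have hue : (0:ℝ) < u ^ e := Real.rpow_pos_of_pos hu0 e
      field_simp
    have hQts : Qt τs - Qt u ≤ A * ((τs / u) ^ e - 1) :=
      (hQt u τs hu1 hτu).le.trans (hIle.trans hIg.le)
    -- A ≤ Qt u
    have hR1 : (1:ℝ) ≤ (τs / u) ^ e := Real.one_le_rpow ((one_le_div hu0).2 hτu) he.le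
    have hR0 : (0:ℝ) < (τs / u) ^ e := lt_of_lt_of_le one_pos hR1
    have hQtsA : Qt τs = A * (τs / u) ^ e := by
      have : A * (τs / u) ^ e = Qt τs * ((u / τs) ^ e * (τs / u) ^ e) := by
        rw [hA, hφ]; ring
      rw [this, hmul1 τs hτ0, mul_one]
    have hAQu : A ≤ Qt u := by nlinarith [hQtsA ▸ hQts]
    have hv : Qt v ≤ A * (v / u) ^ e := hptQ v (Set.right_mem_Icc.2 huv)
    calc Qt v ≤ A * (v / u) ^ e := hv
      _ ≤ Qt u * (v / u) ^ e := by
          apply mul_le_mul_of_nonneg_right hAQu (by positivity)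
  · have : Qt v - Qt u = 0 := by
      rw [hQt u v hu1 huv, intervalIntegral.integral_undef hint]
    nlinarith

lemma Qt_tendsto_atTop
    {Ω : Type} [MeasurableSpace Ω] (P : Measure Ω) [IsProbabilityMeasure P]
    (Y : Ω → ℝ) (hYmeas : Measurable Y) (hYvar : (∫ ω, (Y ω) ^ 2 ∂P) = 1)
    (Vbar : ℝ → ℝ) (hVbar : ∀ t, Vbar t = (P {ω | t < Y ω}).toReal)
    (D : ℝ → ℝ) (hD : ∀ t, D t = ∫ ω, (if |Y ω| < t then (Y ω) ^ 2 else 0) ∂P)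
    (Qt : ℝ → ℝ)
    (htail : ∃ c₁ c₂ : ℝ, 0 < c₁ ∧ 0 < c₂ ∧ ∀ᶠ t : ℝ in atTop,
        c₁ * (D t / t ^ 2 * Real.exp (-Qt t)) ≤ Vbar t ∧
        Vbar t ≤ c₂ * (D t / t ^ 2 * Real.exp (-Qt t))) :
    Tendsto Qt atTop atTop := by
  have hYsq_int : Integrable (fun ω => (Y ω) ^ 2) P := by
    by_contra h
    rw [integral_undef h] at hYvar
    exact one_ne_zero hYvar.symm
  have hmeas_sq : Measurable fun ω => (Y ω) ^ 2 := hYmeas.pow_const 2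
  have hsetmeas : ∀ t : ℝ, MeasurableSet {ω | |Y ω| < t} := fun t =>
    measurableSet_lt hYmeas.abs measurable_const
  have hFmeas : ∀ t : ℝ, Measurable fun ω => (if |Y ω| < t then (Y ω) ^ 2 else 0) :=
    fun t => Measurable.ite (hsetmeas t) hmeas_sq measurable_const
  have hFbd : ∀ t : ℝ, ∀ ω, |if |Y ω| < t then (Y ω) ^ 2 else 0| ≤ (Y ω) ^ 2 := by
    intro t ω
    by_cases h : |Y ω| < t <;> simp [h, abs_of_nonneg (sq_nonneg (Y ω)), sq_nonneg]
  have hFint : ∀ t : ℝ, Integrable (fun ω => (if |Y ω| < t then (Y ω) ^ 2 else 0)) P := by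
    intro t
    exact hYsq_int.mono' (hFmeas t).aestronglyMeasurable (Filter.Eventually.of_forall (hFbd t))
  have hD1 : Tendsto D atTop (nhds 1) := by
    have h := tendsto_integral_filter_of_dominated_convergence (μ := P)
      (l := atTop) (F := fun (t : ℝ) ω => (if |Y ω| < t then (Y ω) ^ 2 else 0))
      (f := fun ω => (Y ω) ^ 2) (fun ω => (Y ω) ^ 2)
      (Filter.Eventually.of_forall fun t => (hFmeas t).aestronglyMeasurable)
      (Filter.Eventually.of_forall fun t =>
        MeasureTheory.ae_of_all _ fun ω => by simpa using hFbd t ω)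
      hYsq_int
      (MeasureTheory.ae_of_all _ fun ω => by
        apply tendsto_const_nhds.congr'
        filter_upwards [eventually_gt_atTop (|Y ω|)] with t ht
        rw [if_pos ht])
    rw [hYvar] at h
    exact h.congr fun t => (hD t).symm
  have hVb : ∀ t : ℝ, 0 < t → Vbar t * t ^ 2 ≤ 1 - D t := by
    intro t ht
    have hgint : Integrable (fun ω => (Y ω) ^ 2 - (if |Y ω| < t then (Y ω) ^ 2 else 0)) P :=
      hYsq_int.sub (hFint t)
    have h1D : 1 - D t = ∫ ω, ((Y ω) ^ 2 - (if |Y ω| < t then (Y ω) ^ 2 else 0)) ∂P := by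
      rw [integral_sub hYsq_int (hFint t), hYvar, hD]
    have hsmeas : MeasurableSet {ω | t < Y ω} := measurableSet_lt measurable_const hYmeas
    have hhint : Integrable ({ω | t < Y ω}.indicator (fun _ => t ^ 2)) P :=
      (integrable_const (t ^ 2)).indicator hsmeas
    have hmono : ∀ ω, {ω | t < Y ω}.indicator (fun _ => t ^ 2) ω ≤
        (Y ω) ^ 2 - (if |Y ω| < t then (Y ω) ^ 2 else 0) := by
      intro ω
      by_cases h : t < Y ω
      · have habs : ¬ (|Y ω| < t) := by
          rw [not_lt]
          exact le_trans h.le (le_abs_self _)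
        rw [Set.indicator_of_mem (show ω ∈ {ω | t < Y ω} from h), if_neg habs]
        nlinarith
      · rw [Set.indicator_of_notMem (show ω ∉ {ω | t < Y ω} from h)]
        by_cases h2 : |Y ω| < t <;> simp [h2, sq_nonneg]
    have := integral_mono hhint hgint hmono
    rw [integral_indicator_const (t ^ 2) hsmeas] at this
    rw [← h1D] at this
    rw [hVbar]
    simpa [smul_eq_mul, mul_comm, measureReal_def] using this
  obtain ⟨c₁, c₂, hc₁, hc₂, hev⟩ := htail
  have hVb0 : Tendsto (fun t => Vbar t * t ^ 2) atTop (nhds 0) := by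
    refine squeeze_zero' (g := fun t => 1 - D t) (Filter.Eventually.of_forall fun t =>
      mul_nonneg (by rw [hVbar]; exact ENNReal.toReal_nonneg) (sq_nonneg t))
      ?_ ?_
    · filter_upwards [eventually_gt_atTop (0:ℝ)] with t ht
      exact hVb t ht
    · have h : Tendsto (fun t : ℝ => 1 - D t) atTop (nhds (1 - 1)) :=
        tendsto_const_nhds.sub hD1
      simpa using h
  have hexp : Tendsto (fun t => Real.exp (-Qt t)) atTop (nhds 0) := by
    refine squeeze_zero' (g := fun t => 2 / c₁ * (Vbar t * t ^ 2))
      (Filter.Eventually.of_forall fun t => (Real.exp_pos _).le)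
      ?_ (by simpa using hVb0.const_mul (2 / c₁))
    filter_upwards [hev, hD1.eventually_const_le (by norm_num : (1:ℝ)/2 < 1),
      eventually_gt_atTop (0:ℝ)] with t hle hd ht
    have hT : (0:ℝ) < t ^ 2 := by positivity
    have hE : (0:ℝ) < Real.exp (-Qt t) := Real.exp_pos _
    have h1 : c₁ * (D t / t ^ 2 * Real.exp (-Qt t)) * t ^ 2 ≤ Vbar t * t ^ 2 :=
      mul_le_mul_of_nonneg_right hle.1 hT.le
    have h2 : c₁ * (D t / t ^ 2 * Real.exp (-Qt t)) * t ^ 2 = c₁ * D t * Real.exp (-Qt t) := by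
      field_simp
    rw [h2] at h1
    have h3 : c₁ * (1/2) * Real.exp (-Qt t) ≤ c₁ * D t * Real.exp (-Qt t) := by
      apply mul_le_mul_of_nonneg_right ?_ hE.le
      apply mul_le_mul_of_nonneg_left hd hc₁.le
    rw [div_mul_eq_mul_div, le_div_iff₀ hc₁]
    nlinarith
  have := Real.tendsto_exp_comp_nhds_zero.mp hexp
  simpa [tendsto_neg_atBot_iff] using this

lemma zone_main (Qt : ℝ → ℝ) (s t₂ : ℝ) (hs0 : 0 < s) (hs1 : s < 1) (ht₂ : 1 ≤ t₂)
    (hQ1 : ∀ τ : ℝ, t₂ ≤ τ → 1 ≤ Qt τ ∧ Qt τ ≤ τ ^ s)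
    (hmono : ∀ u v : ℝ, t₂ ≤ u → u ≤ v → Qt v ≤ Qt u * (v / u) ^ s) :
    ∃ t₀ : ℝ, 1 ≤ t₀ ∧ t₂ ^ 2 ≤ t₀ ∧
      (∀ t : ℝ, t₀ ≤ t → Real.sqrt t ≤ rInv (bfun Qt) t ∧ t₂ ≤ rInv (bfun Qt) t ∧
          rInv (bfun Qt) t ≤ t ^ (1/(2-s))) ∧
      (∀ t c : ℝ, t₀ ≤ t → 1 ≤ c →
          rInv (bfun Qt) (c*t) ≤ c ^ (1/(2-s)) * rInv (bfun Qt) t ∧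
          c ^ (1/(2-s)) * rInv (bfun Qt) t ≤ c * rInv (bfun Qt) t) ∧
      (∀ t c : ℝ, t₀ ≤ t → c ≤ 1 → c * rInv (bfun Qt) t ≤ rInv (bfun Qt) (c*t)) := by
  have h2s : (0:ℝ) < 2 - s := by linarith
  have h2s1 : (1:ℝ) ≤ 2 - s := by linarith
  have hinv1 : (1/(2-s)) * (2-s) = 1 := by field_simp
  set b := bfun Qt with hb
  set I := rInv (bfun Qt) with hI
  set S : ℝ → Set ℝ := fun t => {u : ℝ | 0 ≤ u ∧ t ≤ b u} with hS
  have hbdd : ∀ t : ℝ, BddBelow (S t) := fun t => ⟨0, fun x hx => hx.1⟩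
  have bnn : ∀ u : ℝ, 0 ≤ b u := by
    intro u
    have : (0:ℝ) < max (Qt u) 1 := lt_of_lt_of_le one_pos (le_max_right _ _)
    exact div_nonneg (sq_nonneg u) this.le
  have ble : ∀ u : ℝ, b u ≤ u ^ 2 := by
    intro u
    have h1 : (0:ℝ) < max (Qt u) 1 := lt_of_lt_of_le one_pos (le_max_right _ _)
    rw [hb, bfun, div_le_iff₀ h1]
    nlinarith [sq_nonneg u, le_max_right (Qt u) (1:ℝ)]
  have beq : ∀ w : ℝ, t₂ ≤ w → b w = w ^ 2 / Qt w := by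
    intro w hw
    rw [hb, bfun, max_eq_left (hQ1 w hw).1]
  have blb : ∀ w : ℝ, t₂ ≤ w → w ^ (2 - s) ≤ b w := by
    intro w hw
    have hw1 : (1:ℝ) ≤ w := ht₂.trans hw
    have hw0 : (0:ℝ) < w := lt_of_lt_of_le one_pos hw1
    have hQ : (0:ℝ) < Qt w := lt_of_lt_of_le one_pos (hQ1 w hw).1
    rw [beq w hw]
    have h2 : w ^ (2 - s) = w ^ (2:ℝ) / w ^ s := by rw [← Real.rpow_sub hw0]
    have h3 : w ^ (2:ℝ) = w ^ 2 := Real.rpow_two w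
    rw [h2, h3]
    exact div_le_div_of_nonneg_left (sq_nonneg w) hQ ((hQ1 w hw).2)
  have bscale : ∀ w l : ℝ, t₂ ≤ w → 1 ≤ l → l ^ (2-s) * b w ≤ b (l*w) := by
    intro w l hw hl
    have hw1 : (1:ℝ) ≤ w := ht₂.trans hw
    have hw0 : (0:ℝ) < w := lt_of_lt_of_le one_pos hw1
    have hl0 : (0:ℝ) < l := lt_of_lt_of_le one_pos hl
    have hlw : t₂ ≤ l * w := hw.trans (le_mul_of_one_le_left hw0.le hl)
    have hQw : (0:ℝ) < Qt w := lt_of_lt_of_le one_pos (hQ1 w hw).1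
    have hQlw : (0:ℝ) < Qt (l*w) := lt_of_lt_of_le one_pos (hQ1 _ hlw).1
    have hQle : Qt (l*w) ≤ Qt w * l ^ s := by
      have := hmono w (l*w) hw (le_mul_of_one_le_left hw0.le hl)
      rwa [show l * w / w = l by field_simp] at this
    rw [beq w hw, beq (l*w) hlw, le_div_iff₀ hQlw]
    have hll : l ^ (2-s) * l ^ s = l ^ 2 := by
      rw [← Real.rpow_add hl0, show 2 - s + s = 2 by ring, Real.rpow_two]
    have h1 : l ^ (2-s) * (w^2 / Qt w) * Qt (l*w) ≤ l ^ (2-s) * (w^2 / Qt w) * (Qt w * l ^ s) := by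
      apply mul_le_mul_of_nonneg_left hQle
      positivity
    calc l ^ (2-s) * (w^2 / Qt w) * Qt (l*w) ≤ l ^ (2-s) * (w^2 / Qt w) * (Qt w * l ^ s) := h1
      _ = (l ^ (2-s) * l ^ s) * w ^ 2 := by field_simp
      _ = (l*w)^2 := by rw [hll]; ring
  have bmono : ∀ w w' : ℝ, t₂ ≤ w → w ≤ w' → b w ≤ b w' := by
    intro w w' hw hww
    have hw0 : (0:ℝ) < w := lt_of_lt_of_le one_pos (ht₂.trans hw)
    have hl : (1:ℝ) ≤ w'/w := (one_le_div hw0).2 hww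
    have h := bscale w (w'/w) hw hl
    rw [show w'/w*w = w' by field_simp] at h
    calc b w = 1 * b w := (one_mul _).symm
      _ ≤ (w'/w) ^ (2-s) * b w :=
          mul_le_mul_of_nonneg_right (Real.one_le_rpow hl h2s.le) (bnn w)
      _ ≤ b w' := h
  have Sne : ∀ t : ℝ, (S t).Nonempty := by
    intro t
    refine ⟨max t₂ (max t 1), ⟨?_, ?_⟩⟩
    · positivity
    · have h1 : (1:ℝ) ≤ max t₂ (max t 1) := le_max_of_le_right (le_max_right t 1)
      calc t ≤ max t (1:ℝ) := le_max_left t 1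
        _ ≤ max t₂ (max t 1) := le_max_right _ _
        _ = (max t₂ (max t 1)) ^ (1:ℝ) := (Real.rpow_one _).symm
        _ ≤ (max t₂ (max t 1)) ^ (2-s) := Real.rpow_le_rpow_of_exponent_le h1 h2s1
        _ ≤ b _ := blb _ (le_max_left _ _)
  have memlb : ∀ t u : ℝ, u ∈ S t → Real.sqrt t ≤ u := by
    intro t u hu
    have h1 : t ≤ u ^ 2 := hu.2.trans (ble u)
    calc Real.sqrt t ≤ Real.sqrt (u ^ 2) := Real.sqrt_le_sqrt h1
      _ = u := by rw [Real.sqrt_sq hu.1]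
  have Inn : ∀ t : ℝ, 0 ≤ I t := fun t => le_csInf (Sne t) (fun u hu => hu.1)
  have Ilb : ∀ t : ℝ, Real.sqrt t ≤ I t := fun t => le_csInf (Sne t) (memlb t)
  have below : ∀ t u : ℝ, 0 ≤ u → u < I t → b u < t := by
    intro t u hu0 hu
    by_contra h
    push_neg at h
    exact absurd (csInf_le (hbdd t) (⟨hu0, h⟩ : u ∈ S t)) (not_le.2 hu)
  -- choose t₀
  set T : ℝ := max (max (t₂^2) (t₂ ^ ((2-s)/(1-s)))) 1 with hT
  have hT1 : (1:ℝ) ≤ T := le_max_right _ _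
  have hTsq : t₂^2 ≤ T := (le_max_left _ _).trans (le_max_left _ _)
  have hTd : t₂ ^ ((2-s)/(1-s)) ≤ T := (le_max_right _ _).trans (le_max_left _ _)
  have ht₂0 : (0:ℝ) < t₂ := lt_of_lt_of_le one_pos ht₂
  -- facts for t ≥ T
  have Ige : ∀ t : ℝ, T ≤ t → t₂ ≤ I t := by
    intro t ht
    calc t₂ = Real.sqrt (t₂^2) := (Real.sqrt_sq ht₂0.le).symm
      _ ≤ Real.sqrt t := Real.sqrt_le_sqrt (hTsq.trans ht)
      _ ≤ I t := Ilb t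
  have above : ∀ t : ℝ, T ≤ t → ∀ δ : ℝ, 0 < δ → t ≤ b (I t + δ) := by
    intro t ht δ hδ
    obtain ⟨w, hwS, hwlt⟩ := exists_lt_of_csInf_lt (Sne t) (lt_add_of_pos_right (I t) hδ)
    have hwt₂ : t₂ ≤ w := by
      calc t₂ = Real.sqrt (t₂^2) := (Real.sqrt_sq ht₂0.le).symm
        _ ≤ Real.sqrt t := Real.sqrt_le_sqrt (hTsq.trans ht)
        _ ≤ w := memlb t w hwS
    exact hwS.2.trans (bmono w (I t + δ) hwt₂ hwlt.le)
  have hub : ∀ t : ℝ, T ≤ t → I t ≤ t ^ (1/(2-s)) := by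
    intro t ht
    have ht1 : (1:ℝ) ≤ t := hT1.trans ht
    have ht0 : (0:ℝ) < t := lt_of_lt_of_le one_pos ht1
    have hut₂ : t₂ ≤ t ^ (1/(2-s)) := by
      have h1 : (t₂^2 : ℝ) ^ (1/(2-s)) ≤ t ^ (1/(2-s)) :=
        Real.rpow_le_rpow (by positivity) (hTsq.trans ht) (by positivity)
      refine le_trans ?_ h1
      rw [← Real.rpow_two, ← Real.rpow_mul ht₂0.le]
      calc t₂ = t₂ ^ (1:ℝ) := (Real.rpow_one _).symm
        _ ≤ t₂ ^ (2 * (1/(2-s))) := by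
            apply Real.rpow_le_rpow_of_exponent_le ht₂
            rw [mul_one_div, le_div_iff₀ h2s]
            linarith
    apply csInf_le (hbdd t)
    refine ⟨by positivity, ?_⟩
    have : (t ^ (1/(2-s))) ^ (2-s) = t := by
      rw [← Real.rpow_mul ht0.le, hinv1, Real.rpow_one]
    calc t = (t ^ (1/(2-s))) ^ (2-s) := this.symm
      _ ≤ b (t ^ (1/(2-s))) := blb _ hut₂
  refine ⟨T, hT1, hTsq, fun t ht => ⟨Ilb t, Ige t ht, hub t ht⟩, ?_, ?_⟩
  · -- (c)
    intro t c ht hc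
    have ht1 : (1:ℝ) ≤ t := hT1.trans ht
    have ht0 : (0:ℝ) < t := lt_of_lt_of_le one_pos ht1
    have hc0 : (0:ℝ) < c := lt_of_lt_of_le one_pos hc
    set K := c ^ (1/(2-s)) with hK
    have hK1 : (1:ℝ) ≤ K := Real.one_le_rpow hc (by positivity)
    have hK0 : (0:ℝ) < K := lt_of_lt_of_le one_pos hK1
    have hKs : K ^ (2-s) = c := by
      rw [hK, ← Real.rpow_mul hc0.le, hinv1, Real.rpow_one]
    constructor
    · apply le_of_forall_pos_le_add
      intro ε hε
      set δ := ε / K with hδdef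
      have hδ : (0:ℝ) < δ := by positivity
      set w := I t + δ with hw
      have hwt₂ : t₂ ≤ w := le_trans (Ige t ht) (by rw [hw]; linarith)
      have h1 : c * t ≤ b (K * w) := by
        calc c * t ≤ c * b w := mul_le_mul_of_nonneg_left (above t ht δ hδ) hc0.le
          _ = K ^ (2-s) * b w := by rw [hKs]
          _ ≤ b (K * w) := bscale w K hwt₂ hK1
      have h2 : I (c*t) ≤ K * w :=
        csInf_le (hbdd _) ⟨mul_nonneg hK0.le (add_nonneg (Inn t) hδ.le), h1⟩
      calc I (c*t) ≤ K * w := h2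
        _ = K * I t + ε := by rw [hw, hδdef]; field_simp
    · apply mul_le_mul_of_nonneg_right ?_ (Inn t)
      calc K = c ^ (1/(2-s)) := hK
        _ ≤ c ^ (1:ℝ) := by
            apply Real.rpow_le_rpow_of_exponent_le hc
            rw [div_le_one h2s]; linarith
        _ = c := Real.rpow_one c
  · -- (d)
    intro t c ht hc
    have ht1 : (1:ℝ) ≤ t := hT1.trans ht
    have ht0 : (0:ℝ) < t := lt_of_lt_of_le one_pos ht1
    by_cases hc0 : c ≤ 0
    · exact le_trans (mul_nonpos_of_nonpos_of_nonneg hc0 (Inn t)) (Inn (c*t))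
    push_neg at hc0
    apply le_csInf (Sne (c*t))
    intro u hu
    by_cases hut₂ : t₂ ≤ u
    · by_contra hlt
      push_neg at hlt
      have huc : u / c < I t := by
        rw [div_lt_iff₀ hc0]
        linarith [hlt]
      have hbelow : b (u/c) < t := below t (u/c) (div_nonneg hu.1 hc0.le) huc
      have hscale : (1/c) ^ (2-s) * b u ≤ b (u/c) := by
        have h := bscale u (1/c) hut₂ (one_le_one_div hc0 hc)
        rwa [one_div_mul_eq_div] at h
      have h1c : (1:ℝ) ≤ 1/c := one_le_one_div hc0 hc
      have h2 : (1/c) * b u ≤ (1/c) ^ (2-s) * b u := by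
        apply mul_le_mul_of_nonneg_right ?_ (bnn u)
        calc (1/c) = (1/c) ^ (1:ℝ) := (Real.rpow_one _).symm
          _ ≤ (1/c) ^ (2-s) := Real.rpow_le_rpow_of_exponent_le h1c h2s1
      have h3 : (1/c) * b u < t := lt_of_le_of_lt (h2.trans hscale) hbelow
      have h4 : b u < c * t := by
        rw [one_div, inv_mul_lt_iff₀ hc0] at h3
        linarith [h3]
      exact absurd hu.2 (not_le.2 h4)
    · push_neg at hut₂
      -- small u case
      have hbu : c * t ≤ u ^ 2 := hu.2.trans (ble u)
      have hu2 : u ^ 2 < t₂ ^ 2 := by nlinarith [hu.1]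
      have hct : c * t < t₂ ^ 2 := lt_of_le_of_lt hbu hu2
      have hcle : c ≤ t₂^2 / t := by
        rw [le_div_iff₀ ht0]; linarith
      have hsu : Real.sqrt (c*t) ≤ u := memlb (c*t) u hu
      have key : t₂ ≤ t ^ ((1-s)/(2-s)) := by
        have h1 : (t₂ ^ ((2-s)/(1-s))) ^ ((1-s)/(2-s)) ≤ t ^ ((1-s)/(2-s)) := by
          apply Real.rpow_le_rpow (by positivity) (hTd.trans ht)
          exact div_nonneg (by linarith) h2s.le
        refine le_trans ?_ h1
        rw [← Real.rpow_mul ht₂0.le]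
        rw [show (2-s)/(1-s) * ((1-s)/(2-s)) = 1 by
              have h1s : (1:ℝ) - s ≠ 0 := by linarith
              have h2s' : (2:ℝ) - s ≠ 0 := ne_of_gt h2s
              field_simp, Real.rpow_one]
      have h1 : t₂ * t ^ (1/(2-s)) ≤ t := by
        calc t₂ * t ^ (1/(2-s)) ≤ t ^ ((1-s)/(2-s)) * t ^ (1/(2-s)) :=
              mul_le_mul_of_nonneg_right key (Real.rpow_nonneg ht0.le _)
          _ = t ^ ((1-s)/(2-s) + 1/(2-s)) := (Real.rpow_add ht0 _ _).symm
          _ = t ^ (1:ℝ) := by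
              rw [show (1-s)/(2-s) + 1/(2-s) = 1 by
                have h2s' : (2:ℝ) - s ≠ 0 := ne_of_gt h2s
                field_simp
                ring]
          _ = t := Real.rpow_one t
      have h2 : Real.sqrt c ≤ t₂ / Real.sqrt t := by
        calc Real.sqrt c ≤ Real.sqrt (t₂^2/t) := Real.sqrt_le_sqrt hcle
          _ = Real.sqrt (t₂^2) / Real.sqrt t := Real.sqrt_div (by positivity) t
          _ = t₂ / Real.sqrt t := by rw [Real.sqrt_sq ht₂0.le]
      have hst : (0:ℝ) < Real.sqrt t := Real.sqrt_pos.2 ht0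
      have h3 : c * t ^ (1/(2-s)) ≤ Real.sqrt (c*t) := by
        have hcs : c = Real.sqrt c * Real.sqrt c := (Real.mul_self_sqrt hc0.le).symm
        rw [Real.sqrt_mul hc0.le]
        calc c * t ^ (1/(2-s)) = Real.sqrt c * (Real.sqrt c * t ^ (1/(2-s))) := by
              rw [← mul_assoc, ← hcs]
          _ ≤ Real.sqrt c * ((t₂ / Real.sqrt t) * t ^ (1/(2-s))) := by
              apply mul_le_mul_of_nonneg_left ?_ (Real.sqrt_nonneg c)
              exact mul_le_mul_of_nonneg_right h2 (by positivity)
          _ = Real.sqrt c * ((t₂ * t ^ (1/(2-s))) / Real.sqrt t) := by ring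
          _ ≤ Real.sqrt c * (t / Real.sqrt t) := by
              apply mul_le_mul_of_nonneg_left ?_ (Real.sqrt_nonneg c)
              exact div_le_div_of_nonneg_right h1 hst.le |>.trans_eq rfl
          _ = Real.sqrt c * Real.sqrt t := by rw [Real.div_sqrt]
      calc c * I t ≤ c * t ^ (1/(2-s)) := mul_le_mul_of_nonneg_left (hub t ht) hc0.le
        _ ≤ Real.sqrt (c*t) := h3
        _ ≤ u := hsu

/-- Lemma 3: under Assumption 2, for every `s ∈ (r̃,1)` there is `t₀ ≥ 1` such that
(a) `Q̃(t)/tˢ` is decreasing on `[t₀,∞)`, (b) `b⁻¹(t) ≤ t^{1/(2−s)}` for `t ≥ t₀`,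
(c) `b⁻¹(ct) ≤ c^{1/(2−s)} b⁻¹(t) ≤ c b⁻¹(t)` for `t ≥ t₀`, `c ≥ 1`,
(d) `b⁻¹(ct) ≥ c b⁻¹(t)` for `t ≥ t₀`, `c ≤ 1`; moreover
(e) `e^{−Q̃(t/b⁻¹(t))} Q̃(b⁻¹(t)) → 0` as `t → ∞`. -/
theorem stmt4
    {Ω : Type} [MeasurableSpace Ω] (P : MeasureTheory.Measure Ω) [IsProbabilityMeasure P]
    (Y : Ω → ℝ)
    (hYmeas : Measurable (Y))
    (hYmean : (∫ ω, Y ω ∂P) = 0) (hYvar : (∫ ω, (Y ω) ^ 2 ∂P) = 1)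
    (Vbar : ℝ → ℝ) (hVbar : ∀ t : ℝ, Vbar t = (P {ω | t < Y ω}).toReal)
    (D : ℝ → ℝ) (hD : ∀ t : ℝ, D t = ∫ ω, (if |Y ω| < t then (Y ω) ^ 2 else 0) ∂P)
    (Qt : ℝ → ℝ) (qt : ℝ → ℝ)
    (hQt : ∀ a b : ℝ, 1 ≤ a → a ≤ b → Qt b - Qt a = ∫ s in a..b, qt s)
    (htail : ∃ c₁ c₂ : ℝ, 0 < c₁ ∧ 0 < c₂ ∧ ∀ᶠ t : ℝ in atTop,
        c₁ * (D t / t ^ 2 * Real.exp (-Qt t)) ≤ Vbar t ∧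
        Vbar t ≤ c₂ * (D t / t ^ 2 * Real.exp (-Qt t)))
    (rt : ℝ)
    (hrt : Filter.limsup (fun t : ℝ => ((t * qt t / Qt t : ℝ) : EReal)) atTop = (rt : EReal))
    (hrt1 : rt < 1)
    (hlog : ((rt / (1 - rt) : ℝ) : EReal) <
        Filter.liminf (fun t : ℝ => ((Qt t / Real.log t : ℝ) : EReal)) atTop)
    (κt : ℕ) (hκt : κt = kappaOf Qt)
    (hmom : MeasureTheory.Integrable (fun ω => |Y ω| ^ (κt + 1)) P)
    :
    (∀ s : ℝ, rt < s → s < 1 → ∃ t₀ : ℝ, 1 ≤ t₀ ∧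
      (∀ u v : ℝ, t₀ ≤ u → u ≤ v → Qt v / v ^ s ≤ Qt u / u ^ s) ∧
      (∀ t : ℝ, t₀ ≤ t → rInv (bfun Qt) t ≤ t ^ (1 / (2 - s))) ∧
      (∀ t c : ℝ, t₀ ≤ t → 1 ≤ c →
        rInv (bfun Qt) (c * t) ≤ c ^ (1 / (2 - s)) * rInv (bfun Qt) t ∧
        c ^ (1 / (2 - s)) * rInv (bfun Qt) t ≤ c * rInv (bfun Qt) t) ∧
      (∀ t c : ℝ, t₀ ≤ t → c ≤ 1 →
        c * rInv (bfun Qt) t ≤ rInv (bfun Qt) (c * t))) ∧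
    Tendsto (fun t : ℝ => Real.exp (-Qt (t / rInv (bfun Qt) t)) * Qt (rInv (bfun Qt) t))
      atTop (nhds 0) := by
  have hQtop : Tendsto Qt atTop atTop :=
    Qt_tendsto_atTop P Y hYmeas hYvar Vbar hVbar D hD Qt htail
  have hlimsup_ev : ∀ e : ℝ, rt < e → ∀ᶠ τ : ℝ in atTop, τ * qt τ / Qt τ < e := by
    intro e he
    have h1 : Filter.limsup (fun t : ℝ => ((t * qt t / Qt t : ℝ) : EReal)) atTop
        < ((e : ℝ) : EReal) := by
      rw [hrt]; exact_mod_cast he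
    filter_upwards [Filter.eventually_lt_of_limsup_lt h1] with τ hτ
    exact_mod_cast hτ
  have hrtnn : 0 ≤ rt := by
    by_contra hneg
    push_neg at hneg
    have hev := hlimsup_ev (rt/2) (by linarith)
    obtain ⟨c₀, hc₀⟩ := eventually_atTop.mp
      ((hev.and (hQtop.eventually_gt_atTop 0)).and (eventually_ge_atTop (1:ℝ)))
    have hanti : ∀ v, c₀ ≤ v → Qt v ≤ Qt c₀ := by
      intro v hv
      have h1c : (1:ℝ) ≤ c₀ := (hc₀ c₀ le_rfl).2
      have hqneg : ∀ τ ∈ Set.Icc c₀ v, qt τ ≤ 0 := by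
        intro τ hτ
        obtain ⟨⟨h1, h2⟩, h3⟩ := hc₀ τ hτ.1
        have hτ0 : (0:ℝ) < τ := lt_of_lt_of_le one_pos h3
        have h4 : τ * qt τ < (rt/2) * Qt τ := by
          rw [div_lt_iff₀ h2] at h1; linarith
        nlinarith
      have hdiff := hQt c₀ v h1c hv
      by_cases hint : IntervalIntegrable qt volume c₀ v
      · have h5 : 0 ≤ ∫ s in c₀..v, -qt s :=
          intervalIntegral.integral_nonneg hv (fun τ hτ => by linarith [hqneg τ hτ])
        rw [intervalIntegral.integral_neg] at h5
        linarith
      · rw [intervalIntegral.integral_undef hint] at hdiff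
        linarith
    obtain ⟨v, hv1, hv2⟩ := ((hQtop.eventually_gt_atTop (Qt c₀)).and
      (eventually_ge_atTop c₀)).exists
    exact absurd (hanti v hv2) (not_le.2 hv1)
  have hptall : ∀ e : ℝ, rt < e → ∀ᶠ τ : ℝ in atTop, 0 < Qt τ ∧ qt τ ≤ e * Qt τ / τ := by
    intro e he
    filter_upwards [hlimsup_ev e he, hQtop.eventually_gt_atTop 0,
      eventually_ge_atTop (1:ℝ)] with τ h1 h2 h3
    have hτ0 : (0:ℝ) < τ := lt_of_lt_of_le one_pos h3
    refine ⟨h2, ?_⟩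
    rw [le_div_iff₀ hτ0]
    rw [div_lt_iff₀ h2] at h1
    nlinarith
  have hzone : ∀ e : ℝ, rt < e → e < 1 → ∃ t₂ : ℝ, 1 ≤ t₂ ∧
      (∀ τ : ℝ, t₂ ≤ τ → 1 ≤ Qt τ ∧ Qt τ ≤ τ ^ e) ∧
      (∀ u v : ℝ, t₂ ≤ u → u ≤ v → Qt v ≤ Qt u * (v / u) ^ e) := by
    intro e he he1
    set e' := (rt + e)/2 with he'def
    have he'lt : rt < e' := by rw [he'def]; linarith
    have he'e : e' < e := by rw [he'def]; linarith
    have he'0 : 0 < e' := lt_of_le_of_lt hrtnn he'lt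
    have he0 : 0 < e := lt_of_le_of_lt hrtnn he
    obtain ⟨a₀, ha₀⟩ := eventually_atTop.mp ((hptall e' he'lt).and (eventually_ge_atTop (1:ℝ)))
    set c₀ := max a₀ 1 with hc₀def
    have hc₀1 : (1:ℝ) ≤ c₀ := le_max_right _ _
    have hpt' : ∀ τ, c₀ ≤ τ → 0 < Qt τ ∧ qt τ ≤ e' * Qt τ / τ :=
      fun τ hτ => (ha₀ τ ((le_max_left _ _).trans hτ)).1
    have hpte : ∀ τ, c₀ ≤ τ → 0 < Qt τ ∧ qt τ ≤ e * Qt τ / τ := by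
      intro τ hτ
      obtain ⟨h1, h2⟩ := hpt' τ hτ
      have hτ0 : (0:ℝ) < τ := lt_of_lt_of_le (lt_of_lt_of_le one_pos hc₀1) hτ
      refine ⟨h1, h2.trans ?_⟩
      apply div_le_div_of_nonneg_right ?_ hτ0.le |>.trans_eq rfl
      exact mul_le_mul_of_nonneg_right he'e.le h1.le
    have gr' := gron_aux Qt qt e' he'0 c₀ hc₀1 hQt hpt'
    have gre := gron_aux Qt qt e he0 c₀ hc₀1 hQt hpte
    have hc₀0 : (0:ℝ) < c₀ := lt_of_lt_of_le one_pos hc₀1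
    set C := Qt c₀ / c₀ ^ e' with hCdef
    have hup : ∀ τ : ℝ, c₀ ≤ τ → Qt τ ≤ C * τ ^ e' := by
      intro τ hτ
      have hτ0 : (0:ℝ) < τ := lt_of_lt_of_le hc₀0 hτ
      have h := gr' c₀ τ le_rfl hτ
      rw [Real.div_rpow hτ0.le hc₀0.le] at h
      calc Qt τ ≤ Qt c₀ * (τ ^ e' / c₀ ^ e') := h
        _ = C * τ ^ e' := by rw [hCdef]; ring
    have hev2 : ∀ᶠ τ : ℝ in atTop, C ≤ τ ^ (e - e') :=
      (tendsto_rpow_atTop (by linarith : 0 < e - e')).eventually_ge_atTop C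
    obtain ⟨a₁, ha₁⟩ := eventually_atTop.mp (hev2.and (hQtop.eventually_ge_atTop 1))
    refine ⟨max (max c₀ a₁) 1, le_max_right _ _, ?_, ?_⟩
    · intro τ hτ
      have hτc₀ : c₀ ≤ τ := ((le_max_left _ _).trans (le_max_left _ _)).trans hτ
      have hτa₁ : a₁ ≤ τ := ((le_max_right _ _).trans (le_max_left _ _)).trans hτ
      have hτ0 : (0:ℝ) < τ := lt_of_lt_of_le one_pos ((le_max_right _ _).trans hτ)
      refine ⟨(ha₁ τ hτa₁).2, ?_⟩
      calc Qt τ ≤ C * τ ^ e' := hup τ hτc₀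
        _ ≤ τ ^ (e - e') * τ ^ e' :=
            mul_le_mul_of_nonneg_right (ha₁ τ hτa₁).1 (Real.rpow_nonneg hτ0.le _)
        _ = τ ^ e := by rw [← Real.rpow_add hτ0]; ring_nf
    · intro u v hu huv
      exact gre u v (((le_max_left _ _).trans (le_max_left _ _)).trans hu) huv
  constructor
  · -- parts (a)-(d)
    intro s hs1 hs2
    have hs0 : 0 < s := lt_of_le_of_lt hrtnn hs1
    obtain ⟨t₂, ht₂, hQ1, hmono⟩ := hzone s hs1 hs2
    obtain ⟨t₀, ht₀1, ht₀sq, hbcd1, hcpart, hdpart⟩ := zone_main Qt s t₂ hs0 hs2 ht₂ hQ1 hmono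
    refine ⟨t₀, ht₀1, ?_, fun t ht => (hbcd1 t ht).2.2, hcpart, hdpart⟩
    intro u v hu huv
    have ht₂sq : t₂ ≤ t₂ ^ 2 := by nlinarith
    have ht₂u : t₂ ≤ u := (ht₂sq.trans ht₀sq).trans hu
    have hu0 : (0:ℝ) < u := lt_of_lt_of_le one_pos (ht₂.trans ht₂u)
    have hv0 : (0:ℝ) < v := lt_of_lt_of_le hu0 huv
    have h := hmono u v ht₂u huv
    have hus : (0:ℝ) < u ^ s := Real.rpow_pos_of_pos hu0 s
    have hvs : (0:ℝ) < v ^ s := Real.rpow_pos_of_pos hv0 s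
    rw [div_le_div_iff₀ hvs hus]
    rw [Real.div_rpow hv0.le hu0.le] at h
    have hQu : 0 ≤ Qt u := by linarith [(hQ1 u ht₂u).1]
    calc Qt v * u ^ s ≤ (Qt u * (v ^ s / u ^ s)) * u ^ s :=
          mul_le_mul_of_nonneg_right h hus.le
      _ = Qt u * v ^ s := by field_simp
  · -- part (e)
    set x := rt / (1 - rt) with hxdef
    have hrt1' : (0:ℝ) < 1 - rt := by linarith
    have hx0 : 0 ≤ x := div_nonneg hrtnn hrt1'.le
    obtain ⟨β, hxβ, hβlim⟩ : ∃ β : ℝ, x < β ∧ ((β : ℝ) : EReal) <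
        Filter.liminf (fun t : ℝ => ((Qt t / Real.log t : ℝ) : EReal)) atTop := by
      by_cases htop : Filter.liminf (fun t : ℝ => ((Qt t / Real.log t : ℝ) : EReal)) atTop = ⊤
      · exact ⟨x + 1, by linarith, by rw [htop]; exact EReal.coe_lt_top _⟩
      · set L := Filter.liminf (fun t : ℝ => ((Qt t / Real.log t : ℝ) : EReal)) atTop with hL
        have hbot : L ≠ ⊥ := by
          intro hb
          rw [hb] at hlog
          exact absurd hlog (by simp)
        have hLeq : ((L.toReal : ℝ) : EReal) = L := EReal.coe_toReal htop hbot
        have hxL : x < L.toReal := by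
          have := hlog
          rw [← hLeq] at this
          exact_mod_cast this
        refine ⟨(x + L.toReal)/2, by linarith, ?_⟩
        rw [← hLeq]
        exact_mod_cast (by linarith : (x + L.toReal)/2 < L.toReal)
    have hβ0 : 0 < β := lt_of_le_of_lt hx0 hxβ
    set y := (x + β)/2 with hydef
    have hy0 : 0 < y := by rw [hydef]; linarith
    have hyβ : y < β := by rw [hydef]; linarith
    have hxy : x < y := by rw [hydef]; linarith
    have h1y : (0:ℝ) < 1 + y := by linarith
    set s := y / (1 + y) with hsdef
    have hs0 : 0 < s := div_pos hy0 h1y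
    have hs1 : s < 1 := (div_lt_one h1y).2 (by linarith)
    have hrts : rt < s := by
      rw [hsdef, lt_div_iff₀ h1y]
      have hxeq : x * (1 - rt) = rt := by
        rw [hxdef]; field_simp
      nlinarith
    have h1s : 1 - s = 1/(1 + y) := by rw [hsdef]; field_simp; ring
    have hnum : 0 < β * (1 - s) - s := by
      rw [h1s, hsdef]
      have heq : β * (1/(1+y)) - y/(1+y) = (β - y)/(1+y) := by ring
      rw [heq]
      exact div_pos (by linarith) h1y
    have h2s : (0:ℝ) < 2 - s := by linarith
    set a := (1 - s)/(2 - s) with hadef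
    set δ := (β * (1 - s) - s)/(2 - s) with hδdef
    have hδ0 : 0 < δ := div_pos hnum h2s
    have ha0 : 0 < a := div_pos (by linarith) h2s
    obtain ⟨t₂, ht₂, hQ1, hmono⟩ := hzone s hrts hs1
    obtain ⟨t₀, ht₀1, ht₀sq, hIfacts, -, -⟩ := zone_main Qt s t₂ hs0 hs1 ht₂ hQ1 hmono
    have hβev : ∀ᶠ τ : ℝ in atTop, β * Real.log τ < Qt τ := by
      filter_upwards [Filter.eventually_lt_of_lt_liminf hβlim,
        eventually_ge_atTop (2:ℝ)] with τ h hτ2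
      have hβτ : β < Qt τ / Real.log τ := by exact_mod_cast h
      have hlogpos : 0 < Real.log τ := Real.log_pos (by linarith)
      calc β * Real.log τ < (Qt τ / Real.log τ) * Real.log τ :=
            mul_lt_mul_of_pos_right hβτ hlogpos
        _ = Qt τ := by field_simp
    obtain ⟨τ₃, hτ₃⟩ := eventually_atTop.mp hβev
    apply squeeze_zero' ?_ ?_ (tendsto_rpow_neg_atTop hδ0)
    · filter_upwards [eventually_ge_atTop t₀] with t ht
      have hIt₂ : t₂ ≤ rInv (bfun Qt) t := (hIfacts t ht).2.1
      have h1 : 1 ≤ Qt (rInv (bfun Qt) t) := (hQ1 _ hIt₂).1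
      positivity
    · filter_upwards [eventually_ge_atTop (max t₀ 1),
        (tendsto_rpow_atTop ha0).eventually_ge_atTop (max τ₃ 1)] with t ht h3
      set It := rInv (bfun Qt) t with hItdef
      have htt₀ : t₀ ≤ t := (le_max_left _ _).trans ht
      have ht1 : (1:ℝ) ≤ t := (le_max_right _ _).trans ht
      have ht0 : (0:ℝ) < t := lt_of_lt_of_le one_pos ht1
      obtain ⟨hsq, hIt₂, hIub⟩ := hIfacts t htt₀
      have hIt0 : (0:ℝ) < It := lt_of_lt_of_le (lt_of_lt_of_le one_pos ht₂) hIt₂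
      have hQI : Qt It ≤ t ^ (s/(2-s)) := by
        calc Qt It ≤ It ^ s := (hQ1 It hIt₂).2
          _ ≤ (t ^ (1/(2-s))) ^ s := Real.rpow_le_rpow hIt0.le hIub hs0.le
          _ = t ^ (s/(2-s)) := by
              rw [← Real.rpow_mul ht0.le, show 1/(2-s)*s = s/(2-s) by ring]
      have hQI1 : 1 ≤ Qt It := (hQ1 It hIt₂).1
      have hrat : t ^ a ≤ t / It := by
        rw [le_div_iff₀ hIt0]
        calc t ^ a * It ≤ t ^ a * t ^ (1/(2-s)) :=
              mul_le_mul_of_nonneg_left hIub (Real.rpow_nonneg ht0.le _)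
          _ = t ^ (a + 1/(2-s)) := (Real.rpow_add ht0 _ _).symm
          _ = t ^ (1:ℝ) := by
              rw [hadef, ← add_div, show 1 - s + 1 = 2 - s by ring,
                div_self (ne_of_gt h2s)]
          _ = t := Real.rpow_one t
      have hta1 : (1:ℝ) ≤ t ^ a := (le_max_right τ₃ 1).trans h3
      have htaτ₃ : τ₃ ≤ t ^ a := (le_max_left _ _).trans h3
      have hItpos : (0:ℝ) < t / It := lt_of_lt_of_le (lt_of_lt_of_le one_pos hta1) hrat
      have hQrat : β * (a * Real.log t) ≤ Qt (t / It) := by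
        have h4 := hτ₃ (t/It) (htaτ₃.trans hrat)
        have hlogeq : a * Real.log t = Real.log (t ^ a) := (Real.log_rpow ht0 a).symm
        have h5 : Real.log (t ^ a) ≤ Real.log (t/It) :=
          Real.log_le_log (Real.rpow_pos_of_pos ht0 a) hrat
        calc β * (a * Real.log t) = β * Real.log (t ^ a) := by rw [hlogeq]
          _ ≤ β * Real.log (t/It) := mul_le_mul_of_nonneg_left h5 hβ0.le
          _ ≤ Qt (t/It) := h4.le
      have hexpb : Real.exp (-Qt (t/It)) ≤ t ^ (-(β * a)) := by
        rw [Real.rpow_def_of_pos ht0]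
        apply Real.exp_le_exp.2
        linarith [hQrat]
      calc Real.exp (-Qt (t/It)) * Qt It ≤ t ^ (-(β * a)) * t ^ (s/(2-s)) := by
            apply mul_le_mul hexpb hQI (by linarith) (Real.rpow_nonneg ht0.le _)
        _ = t ^ (-(β * a) + s/(2-s)) := (Real.rpow_add ht0 _ _).symm
        _ = t ^ (-δ) := by
            congr 1
            rw [hδdef, hadef]
            field_simp
            ring

end
end

section
/- Suppose Q satisfies Assumption 1, let Q̃(t)=Q(σt+μ)−2 log t, b(t)=t²/(Q̃(t)∨1), b⁻¹(t)=inf{u≥0: t≤b(u)}, ω₁(t)=t²/(Q(t)∨1) and ω₁⁻¹(t)=inf{u≥0: t≤ω₁(u)}. Then: (a) lim_{t→∞} Q(t)/ω₁⁻¹(t) = 0 and lim_{t→∞} Q(t)/b⁻¹(t) = 0; (b) lim_{t→∞} √t/ω₁⁻¹(t) = 0. -/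
open MeasureTheory ProbabilityTheory Filter Finset
open scoped ENNReal NNReal Classical

noncomputable section

lemma ratio_le_of_forall (w : ℝ → ℝ) {a ε : ℝ} (t : ℝ) (hε : 0 < ε) (ha : 0 ≤ a)
    (h : ∀ u : ℝ, 0 ≤ u → t ≤ w u → a ≤ ε * u) : a / rInv w t ≤ ε := by
  by_cases hne : {u : ℝ | 0 ≤ u ∧ t ≤ w u}.Nonempty
  · have hL0 : 0 ≤ rInv w t := Real.sInf_nonneg (fun x hx => hx.1)
    have hL : a / ε ≤ rInv w t := by
      refine le_csInf hne (fun u hu => ?_)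
      rw [div_le_iff₀ hε]
      rw [mul_comm]
      exact h u hu.1 hu.2
    rcases eq_or_lt_of_le ha with h0 | h0
    · simp [← h0, hε.le]
    · have hLpos : 0 < rInv w t := lt_of_lt_of_le (div_pos h0 hε) hL
      rw [div_le_iff₀ hLpos]
      calc a = ε * (a / ε) := by field_simp
        _ ≤ ε * rInv w t := by nlinarith
  · have he : {u : ℝ | 0 ≤ u ∧ t ≤ w u} = ∅ := Set.not_nonempty_iff_eq_empty.mp hne
    rw [rInv, he, Real.sInf_empty, div_zero]
    exact hε.le

lemma comp_of_step (Q : ℝ → ℝ) (T₀ c ρ : ℝ) (hmono : Monotone Q) (hQ0 : ∀ t, 0 ≤ Q t)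
    (hc : 0 < c) (hρ0 : 0 ≤ ρ) (hT₀ : 0 ≤ T₀)
    (hstep : ∀ a, T₀ ≤ a → Q (a * Real.exp c) ≤ Q a * Real.exp (ρ * c)) :
    ∀ u t : ℝ, T₀ ≤ u → u ≤ t → 0 < u →
      Q t ≤ Real.exp (ρ * c) * Q u * (t / u) ^ ρ := by
  have key : ∀ n : ℕ, ∀ a : ℝ, T₀ ≤ a →
      Q (a * Real.exp (n * c)) ≤ Q a * Real.exp (n * (ρ * c)) := by
    intro n
    induction n with
    | zero => intro a ha; simp
    | succ n ih =>
      intro a ha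
      have h1 : a * Real.exp ((n + 1 : ℕ) * c) = (a * Real.exp (n * c)) * Real.exp c := by
        rw [mul_assoc, ← Real.exp_add]; push_cast; ring_nf
      have ha' : T₀ ≤ a * Real.exp (n * c) := by
        have h2 : (1:ℝ) ≤ Real.exp (n * c) := Real.one_le_exp (by positivity)
        nlinarith [hQ0 a]
      calc Q (a * Real.exp ((n + 1 : ℕ) * c)) = Q ((a * Real.exp (n * c)) * Real.exp c) := by
            rw [h1]
        _ ≤ Q (a * Real.exp (n * c)) * Real.exp (ρ * c) := hstep _ ha'
        _ ≤ (Q a * Real.exp (n * (ρ * c))) * Real.exp (ρ * c) := by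
            have := ih a ha
            nlinarith [Real.exp_pos (ρ * c)]
        _ = Q a * Real.exp ((n + 1 : ℕ) * (ρ * c)) := by
            rw [mul_assoc, ← Real.exp_add]; push_cast; ring_nf
  intro u t hTu hut hu0
  have htu1 : 1 ≤ t / u := (one_le_div hu0).mpr hut
  have hlog0 : 0 ≤ Real.log (t / u) := Real.log_nonneg htu1
  set n : ℕ := ⌈Real.log (t / u) / c⌉₊ with hn
  have hnc : Real.log (t / u) ≤ n * c := by
    have := Nat.le_ceil (Real.log (t / u) / c)
    calc Real.log (t/u) = (Real.log (t/u) / c) * c := by field_simp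
      _ ≤ (n : ℝ) * c := by nlinarith
  have hnc2 : (n : ℝ) * c ≤ Real.log (t / u) + c := by
    have := Nat.ceil_lt_add_one (by positivity : (0:ℝ) ≤ Real.log (t / u) / c)
    have h2 : (n : ℝ) ≤ Real.log (t/u)/c + 1 := le_of_lt this
    calc (n:ℝ) * c ≤ (Real.log (t/u)/c + 1) * c := by nlinarith
      _ = Real.log (t/u) + c := by field_simp
  have ht_le : t ≤ u * Real.exp (n * c) := by
    have h3 : t / u ≤ Real.exp (n * c) := by
      calc t / u = Real.exp (Real.log (t / u)) := (Real.exp_log (by positivity)).symm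
        _ ≤ Real.exp (n * c) := Real.exp_le_exp.mpr hnc
    calc t = u * (t / u) := by field_simp
      _ ≤ u * Real.exp (n * c) := by nlinarith
  calc Q t ≤ Q (u * Real.exp (n * c)) := hmono ht_le
    _ ≤ Q u * Real.exp (n * (ρ * c)) := key n u hTu
    _ ≤ Q u * Real.exp (ρ * (Real.log (t/u) + c)) := by
        have : (n:ℝ) * (ρ * c) ≤ ρ * (Real.log (t/u) + c) := by nlinarith
        have := Real.exp_le_exp.mpr this
        nlinarith [hQ0 u]
    _ = Real.exp (ρ * c) * Q u * (t / u) ^ ρ := by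
        rw [Real.rpow_def_of_pos (by positivity), mul_add, Real.exp_add]
        ring_nf

lemma term1_bound {ρ e t u K ε' : ℝ} (hρ0 : 0 < ρ) (hρ1 : ρ < 1) (he : e = (1 - ρ) / 2)
    (ht1 : 1 ≤ t) (hu1 : 1 ≤ u) (hut : u ≤ t ^ (1 - e)) (hK : 0 ≤ K)
    (hKt : K * t ^ (-(2 * e ^ 2)) ≤ ε') :
    K * (u ^ 2 / t) * (t / u) ^ ρ ≤ ε' * u := by
  have ht0 : (0:ℝ) < t := lt_of_lt_of_le one_pos ht1
  have hu0 : (0:ℝ) < u := lt_of_lt_of_le one_pos hu1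
  have hupos : (0:ℝ) < u ^ ρ := Real.rpow_pos_of_pos hu0 ρ
  have htpos : (0:ℝ) < t ^ ρ := Real.rpow_pos_of_pos ht0 ρ
  have htm : (0:ℝ) < t ^ (-(2 * e ^ 2)) := Real.rpow_pos_of_pos ht0 _
  have hε'0 : 0 ≤ ε' := le_trans (by positivity) hKt
  -- u ≤ t^((1-e)*(1-ρ)) * u^ρ
  have hstep : u ≤ t ^ ((1 - e) * (1 - ρ)) * u ^ ρ := by
    have h1 : u ^ (1 - ρ) ≤ (t ^ (1 - e)) ^ (1 - ρ) :=
      Real.rpow_le_rpow hu0.le hut (by linarith)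
    rw [← Real.rpow_mul ht0.le] at h1
    rw [Real.rpow_sub hu0, Real.rpow_one] at h1
    exact (div_le_iff₀ hupos).mp h1
  -- t^((1-e)*(1-ρ)) * t^ρ = t^(-(2e²)) * t
  have hexp : t ^ ((1 - e) * (1 - ρ)) * t ^ ρ = t ^ (-(2 * e ^ 2)) * t := by
    rw [← Real.rpow_add ht0,
      show (1 - e) * (1 - ρ) + ρ = -(2 * e ^ 2) + 1 by rw [he]; ring,
      Real.rpow_add ht0, Real.rpow_one]
  have main : K * u * t ^ ρ ≤ ε' * (t * u ^ ρ) := by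
    have h2 := mul_le_mul_of_nonneg_left hstep (mul_nonneg hK htpos.le)
    have h4 := mul_le_mul_of_nonneg_right hKt (mul_pos ht0 hupos).le
    have h3 : K * t ^ ρ * (t ^ ((1 - e) * (1 - ρ)) * u ^ ρ)
        = K * t ^ (-(2 * e ^ 2)) * (t * u ^ ρ) := by
      rw [show K * t ^ (-(2*e^2)) * (t * u^ρ) = (t^(-(2*e^2)) * t) * (K * u^ρ) by ring,
        ← hexp]
      ring
    nlinarith [h2, h3, h4]
  have expand : K * (u ^ 2 / t) * (t / u) ^ ρ = (K * u * t ^ ρ) * u / (t * u ^ ρ) := by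
    rw [Real.div_rpow ht0.le hu0.le]
    field_simp
  rw [expand, div_le_iff₀ (by positivity)]
  nlinarith

lemma term2_bound {ρ e t u K ε' : ℝ} (hρ0 : 0 < ρ) (hρ1 : ρ < 1) (he : e = (1 - ρ) / 2)
    (ht1 : 1 ≤ t) (hu1 : 1 ≤ u) (hsq : Real.sqrt t ≤ u) (hut : u ≤ t) (hK : 0 ≤ K)
    (hlog : K * (2 * Real.log t) ≤ ε' * t ^ e) :
    K * (2 * Real.log u) * (t / u) ^ ρ ≤ ε' * u := by
  have ht0 : (0:ℝ) < t := lt_of_lt_of_le one_pos ht1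
  have hu0 : (0:ℝ) < u := lt_of_lt_of_le one_pos hu1
  have hsq0 : (0:ℝ) < Real.sqrt t := Real.sqrt_pos.mpr ht0
  have hε'0 : 0 ≤ ε' := by
    have h0 : (0:ℝ) ≤ K * (2 * Real.log t) := by
      have := Real.log_nonneg ht1; positivity
    have := Real.rpow_pos_of_pos ht0 e
    nlinarith
  have h1 : t / u ≤ Real.sqrt t := by
    rw [← Real.div_sqrt]
    exact div_le_div_of_nonneg_left ht0.le hsq0 hsq
  have h2 : (t / u) ^ ρ ≤ Real.sqrt t ^ ρ :=
    Real.rpow_le_rpow (by positivity) h1 hρ0.le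
  have h3 : Real.sqrt t ^ ρ = t ^ (1 / 2 * ρ) := by
    rw [Real.sqrt_eq_rpow, ← Real.rpow_mul ht0.le]
  have h4 : Real.log u ≤ Real.log t := Real.log_le_log hu0 hut
  have h5 : 0 ≤ Real.log u := Real.log_nonneg hu1
  have h6 : t ^ e * t ^ (1 / 2 * ρ) = Real.sqrt t := by
    rw [← Real.rpow_add ht0, Real.sqrt_eq_rpow]
    congr 1
    rw [he]; ring
  have h7 : (0:ℝ) < t ^ (1 / 2 * ρ) := Real.rpow_pos_of_pos ht0 _
  calc K * (2 * Real.log u) * (t / u) ^ ρ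
      ≤ K * (2 * Real.log t) * t ^ (1 / 2 * ρ) := by
        rw [← h3]
        have hpos : (0:ℝ) ≤ (t/u) ^ ρ := by positivity
        have s1 : K * (2 * Real.log u) ≤ K * (2 * Real.log t) := by nlinarith
        exact mul_le_mul s1 h2 hpos (mul_nonneg hK (by nlinarith [Real.log_nonneg ht1]))
    _ ≤ ε' * t ^ e * t ^ (1 / 2 * ρ) := by nlinarith
    _ = ε' * Real.sqrt t := by rw [mul_assoc, h6]
    _ ≤ ε' * u := by nlinarith

set_option maxHeartbeats 1000000 in
lemma key_abstract (Q : ℝ → ℝ) (T₀ C₂ ρ μ σ : ℝ)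
    (hmono : Monotone Q) (hQ0 : ∀ t, 0 ≤ Q t)
    (hT₀ : 1 ≤ T₀) (hQT₀ : 1 ≤ Q T₀)
    (hρ0 : 0 < ρ) (hρ1 : ρ < 1) (hC₂ : 1 ≤ C₂)
    (hcomp : ∀ u t : ℝ, T₀ ≤ u → u ≤ t → Q t ≤ C₂ * Q u * (t / u) ^ ρ)
    (hQinf : Tendsto Q atTop atTop)
    (hμ : 0 < μ) (hσ : 0 < σ) :
    Tendsto (fun t : ℝ => Q t / rInv (omega1 Q) t) atTop (nhds 0) ∧
    Tendsto (fun t : ℝ => Q t / rInv (bfun (QtOf Q μ σ)) t) atTop (nhds 0) ∧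
    Tendsto (fun t : ℝ => Real.sqrt t / rInv (omega1 Q) t) atTop (nhds 0) := by
  obtain ⟨e, he⟩ : ∃ e : ℝ, e = (1 - ρ) / 2 := ⟨_, rfl⟩
  have he2 : 0 < e := by rw [he]; linarith
  have hee : 0 < 2 * e ^ 2 := by positivity
  obtain ⟨C₃, hC₃⟩ : ∃ C₃ : ℝ, C₃ = C₂ * Q T₀ := ⟨_, rfl⟩
  have hC₂0 : (0:ℝ) ≤ C₂ := by linarith
  have hC₃1 : 1 ≤ C₃ := by
    rw [hC₃]
    calc (1:ℝ) = 1 * 1 := by ring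
      _ ≤ C₂ * Q T₀ := mul_le_mul hC₂ hQT₀ zero_le_one hC₂0
  have hT₀0 : (0:ℝ) < T₀ := lt_of_lt_of_le one_pos hT₀
  -- polynomial bound
  have hpoly : ∀ t : ℝ, T₀ ≤ t → Q t ≤ C₃ * t ^ ρ := by
    intro t ht
    have ht0 : (0:ℝ) < t := lt_of_lt_of_le hT₀0 ht
    have h := hcomp T₀ t le_rfl ht
    have h2 : (t / T₀) ^ ρ ≤ t ^ ρ :=
      Real.rpow_le_rpow (by positivity) (div_le_self ht0.le hT₀) hρ0.le
    have h3 : (0:ℝ) < (t / T₀) ^ ρ := Real.rpow_pos_of_pos (by positivity) ρ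
    calc Q t ≤ C₂ * Q T₀ * (t / T₀) ^ ρ := h
      _ ≤ C₂ * Q T₀ * t ^ ρ :=
        mul_le_mul_of_nonneg_left h2 (by positivity)
      _ = C₃ * t ^ ρ := by rw [hC₃]
  -- membership facts
  have mem_facts : ∀ (R : ℝ → ℝ) (t u : ℝ), 0 ≤ t → 0 ≤ u → t ≤ u ^ 2 / max (R u) 1 →
      t * max (R u) 1 ≤ u ^ 2 ∧ Real.sqrt t ≤ u := by
    intro R t u ht0 hu0 h
    have hmax : (0:ℝ) < max (R u) 1 := lt_of_lt_of_le one_pos (le_max_right _ _)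
    have h1 : t * max (R u) 1 ≤ u ^ 2 := (le_div_iff₀ hmax).mp h
    have h2 : t ≤ u ^ 2 := by nlinarith [le_max_right (R u) (1:ℝ)]
    refine ⟨h1, ?_⟩
    calc Real.sqrt t ≤ Real.sqrt (u ^ 2) := Real.sqrt_le_sqrt h2
      _ = u := Real.sqrt_sq hu0
  -- tendsto sqrt
  have hsqrt_tendsto : Tendsto Real.sqrt atTop atTop := by
    apply tendsto_atTop_atTop.mpr
    intro b
    refine ⟨b ^ 2, fun a ha => ?_⟩
    rcases le_or_gt b 0 with hb | hb
    · exact le_trans hb (Real.sqrt_nonneg a)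
    · exact (Real.le_sqrt hb.le (by nlinarith)).mpr ha
  -- case 1 bound (shared)
  have case1 : ∀ t u : ℝ, T₀ ^ 2 ≤ t → 1 ≤ t → t ^ (1 - e) ≤ u →
      ∀ ε2 : ℝ, 0 < ε2 → C₃ * t ^ (-e) ≤ ε2 → Q t ≤ ε2 * u := by
    intro t u htT2 ht1 hcase ε2 hε2 hA
    have ht0 : (0:ℝ) < t := lt_of_lt_of_le one_pos ht1
    have htT₀ : T₀ ≤ t := by nlinarith
    have hsplit : t ^ ρ = t ^ (-e) * t ^ (1 - e) := by
      rw [← Real.rpow_add ht0]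
      congr 1
      rw [he]; ring
    have hp1 : (0:ℝ) < t ^ (-e) := Real.rpow_pos_of_pos ht0 _
    have hp2 : (0:ℝ) < t ^ (1 - e) := Real.rpow_pos_of_pos ht0 _
    calc Q t ≤ C₃ * t ^ ρ := hpoly t htT₀
      _ = (C₃ * t ^ (-e)) * t ^ (1 - e) := by rw [hsplit]; ring
      _ ≤ ε2 * u := mul_le_mul hA hcase hp2.le hε2.le
  refine ⟨?_, ?_, ?_⟩
  -- Goal 1
  · rw [NormedAddCommGroup.tendsto_nhds_zero]
    intro ε hε
    have evA : ∀ᶠ t : ℝ in atTop, C₃ * t ^ (-e) ≤ ε / 2 := by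
      have h := (tendsto_rpow_neg_atTop he2).const_mul C₃
      rw [mul_zero] at h
      exact h.eventually_le_const (by linarith)
    have evB : ∀ᶠ t : ℝ in atTop, C₂ * t ^ (-(2 * e ^ 2)) ≤ ε / 2 := by
      have h := (tendsto_rpow_neg_atTop hee).const_mul C₂
      rw [mul_zero] at h
      exact h.eventually_le_const (by linarith)
    filter_upwards [evA, evB, eventually_ge_atTop (max (T₀ ^ 2) 1)] with t hA hB hT
    have ht1 : (1:ℝ) ≤ t := le_trans (le_max_right _ _) hT
    have htT2 : T₀ ^ 2 ≤ t := le_trans (le_max_left _ _) hT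
    have ht0 : (0:ℝ) < t := lt_of_lt_of_le one_pos ht1
    have key : ∀ u : ℝ, 0 ≤ u → t ≤ omega1 Q u → Q t ≤ (ε / 2) * u := by
      intro u hu0 hut
      rw [omega1] at hut
      obtain ⟨hu2, hsq⟩ := mem_facts Q t u ht0.le hu0 hut
      have hu1 : (1:ℝ) ≤ u := by
        calc (1:ℝ) = Real.sqrt 1 := Real.sqrt_one.symm
          _ ≤ Real.sqrt t := Real.sqrt_le_sqrt ht1
          _ ≤ u := hsq
      have hT₀u : T₀ ≤ u := by
        calc T₀ = Real.sqrt (T₀ ^ 2) := (Real.sqrt_sq hT₀0.le).symm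
          _ ≤ Real.sqrt t := Real.sqrt_le_sqrt htT2
          _ ≤ u := hsq
      by_cases hcase : t ^ (1 - e) ≤ u
      · exact case1 t u htT2 ht1 hcase (ε / 2) (half_pos hε) hA
      · push_neg at hcase
        have hut2 : u ≤ t ^ (1 - e) := hcase.le
        have hutt : u ≤ t := by
          calc u ≤ t ^ (1 - e) := hut2
            _ ≤ t ^ (1:ℝ) := Real.rpow_le_rpow_of_exponent_le ht1 (by linarith)
            _ = t := Real.rpow_one t
        have hQu : Q u ≤ u ^ 2 / t := by
          rw [le_div_iff₀ ht0]
          nlinarith [le_max_left (Q u) (1:ℝ)]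
        have hp : (0:ℝ) < (t / u) ^ ρ :=
          Real.rpow_pos_of_pos (by positivity) ρ
        calc Q t ≤ C₂ * Q u * (t / u) ^ ρ := hcomp u t hT₀u hutt
          _ ≤ C₂ * (u ^ 2 / t) * (t / u) ^ ρ :=
            mul_le_mul_of_nonneg_right
              (mul_le_mul_of_nonneg_left hQu hC₂0) hp.le
          _ ≤ (ε / 2) * u := term1_bound hρ0 hρ1 he ht1 hu1 hut2 hC₂0 hB
    have hfin := ratio_le_of_forall (omega1 Q) t (half_pos hε) (hQ0 t) key
    have hL0 : 0 ≤ rInv (omega1 Q) t := Real.sInf_nonneg (fun x hx => hx.1)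
    rw [Real.norm_eq_abs, abs_of_nonneg (div_nonneg (hQ0 t) hL0)]
    linarith
  -- Goal 2
  · rw [NormedAddCommGroup.tendsto_nhds_zero]
    intro ε hε
    obtain ⟨C₅, hC₅⟩ : ∃ C₅ : ℝ, C₅ = C₂ * (max 1 σ⁻¹) ^ ρ := ⟨_, rfl⟩
    have hM1 : (1:ℝ) ≤ (max 1 σ⁻¹) ^ ρ := by
      calc (1:ℝ) = (1:ℝ) ^ ρ := (Real.one_rpow ρ).symm
        _ ≤ (max 1 σ⁻¹) ^ ρ := Real.rpow_le_rpow zero_le_one (le_max_left _ _) hρ0.le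
    have hC₅1 : 1 ≤ C₅ := by
      rw [hC₅]
      calc (1:ℝ) = 1 * 1 := by ring
        _ ≤ C₂ * (max 1 σ⁻¹) ^ ρ := mul_le_mul hC₂ hM1 zero_le_one hC₂0
    have hC₅0 : (0:ℝ) ≤ C₅ := by linarith
    obtain ⟨C₆, hC₆⟩ : ∃ C₆ : ℝ, C₆ = C₂ * C₅ := ⟨_, rfl⟩
    have hC₆1 : 1 ≤ C₆ := by
      rw [hC₆]
      calc (1:ℝ) = 1 * 1 := by ring
        _ ≤ C₂ * C₅ := mul_le_mul hC₂ hC₅1 zero_le_one hC₂0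
    have hC₆0 : (0:ℝ) ≤ C₆ := by linarith
    have evA : ∀ᶠ t : ℝ in atTop, C₃ * t ^ (-e) ≤ ε / 2 := by
      have h := (tendsto_rpow_neg_atTop he2).const_mul C₃
      rw [mul_zero] at h
      exact h.eventually_le_const (by linarith)
    have evC : ∀ᶠ t : ℝ in atTop, C₆ * t ^ (-(2 * e ^ 2)) ≤ ε / 4 := by
      have h := (tendsto_rpow_neg_atTop hee).const_mul C₆
      rw [mul_zero] at h
      exact h.eventually_le_const (by linarith)
    have evD : ∀ᶠ t : ℝ in atTop, C₆ * (2 * Real.log t) ≤ ε / 4 * t ^ e := by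
      have h := (isLittleO_log_rpow_atTop he2).const_mul_left (C₆ * 2)
      have h2 := h.def (show (0:ℝ) < ε / 4 by linarith)
      filter_upwards [h2, eventually_ge_atTop (1:ℝ)] with t h2 ht1
      have hlt : 0 ≤ Real.log t := Real.log_nonneg ht1
      have hp : (0:ℝ) < t ^ e := Real.rpow_pos_of_pos (by linarith) e
      rw [Real.norm_eq_abs, Real.norm_eq_abs, abs_of_nonneg (by positivity),
        abs_of_nonneg hp.le] at h2
      linarith
    filter_upwards [evA, evC, evD,
      eventually_ge_atTop (max (T₀ ^ 2) (max 1 ((T₀ / σ) ^ 2)))] with t hA hC hD hT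
    have ht1 : (1:ℝ) ≤ t := le_trans (le_trans (le_max_left _ _) (le_max_right _ _)) hT
    have htT2 : T₀ ^ 2 ≤ t := le_trans (le_max_left _ _) hT
    have htTσ : (T₀ / σ) ^ 2 ≤ t := le_trans (le_trans (le_max_right _ _) (le_max_right _ _)) hT
    have ht0 : (0:ℝ) < t := lt_of_lt_of_le one_pos ht1
    have key : ∀ u : ℝ, 0 ≤ u → t ≤ bfun (QtOf Q μ σ) u → Q t ≤ (ε / 2) * u := by
      intro u hu0 hut
      rw [bfun] at hut
      obtain ⟨hu2, hsq⟩ := mem_facts (QtOf Q μ σ) t u ht0.le hu0 hut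
      have hu1 : (1:ℝ) ≤ u := by
        calc (1:ℝ) = Real.sqrt 1 := Real.sqrt_one.symm
          _ ≤ Real.sqrt t := Real.sqrt_le_sqrt ht1
          _ ≤ u := hsq
      have hT₀u : T₀ ≤ u := by
        calc T₀ = Real.sqrt (T₀ ^ 2) := (Real.sqrt_sq hT₀0.le).symm
          _ ≤ Real.sqrt t := Real.sqrt_le_sqrt htT2
          _ ≤ u := hsq
      have hσu : T₀ ≤ σ * u + μ := by
        have h1 : T₀ / σ ≤ u := by
          calc T₀ / σ = Real.sqrt ((T₀ / σ) ^ 2) := (Real.sqrt_sq (by positivity)).symm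
            _ ≤ Real.sqrt t := Real.sqrt_le_sqrt htTσ
            _ ≤ u := hsq
        have h2 : T₀ ≤ σ * u := by
          rw [div_le_iff₀ hσ] at h1
          linarith [mul_comm σ u]
        linarith
      by_cases hcase : t ^ (1 - e) ≤ u
      · exact case1 t u htT2 ht1 hcase (ε / 2) (half_pos hε) hA
      · push_neg at hcase
        have hut2 : u ≤ t ^ (1 - e) := hcase.le
        have hutt : u ≤ t := by
          calc u ≤ t ^ (1 - e) := hut2
            _ ≤ t ^ (1:ℝ) := Real.rpow_le_rpow_of_exponent_le ht1 (by linarith)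
            _ = t := Real.rpow_one t
        have hv0 : (0:ℝ) < σ * u + μ := lt_of_lt_of_le hT₀0 hσu
        have hQtu : QtOf Q μ σ u ≤ u ^ 2 / t := by
          rw [le_div_iff₀ ht0]
          nlinarith [le_max_left (QtOf Q μ σ u) (1:ℝ)]
        have hQv : Q (σ * u + μ) ≤ u ^ 2 / t + 2 * Real.log u := by
          have hd : QtOf Q μ σ u = Q (σ * u + μ) - 2 * Real.log u := rfl
          rw [hd] at hQtu
          linarith
        have hQuv : Q u ≤ C₅ * Q (σ * u + μ) := by
          rcases le_total u (σ * u + μ) with h | h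
          · have h1 := hmono h
            have h2 := mul_le_mul_of_nonneg_right hC₅1 (hQ0 (σ * u + μ))
            rw [one_mul] at h2
            linarith
          · have h2 := hcomp (σ * u + μ) u hσu h
            have h3 : u / (σ * u + μ) ≤ max 1 σ⁻¹ := by
              have hσu0 : (0:ℝ) < σ * u := by positivity
              have h4 : u / (σ * u + μ) ≤ u / (σ * u) :=
                div_le_div_of_nonneg_left (by linarith) hσu0 (by linarith)
              have h5 : u / (σ * u) = σ⁻¹ := by
                field_simp
              rw [h5] at h4
              exact le_trans h4 (le_max_right _ _)
            have h4 : (u / (σ * u + μ)) ^ ρ ≤ (max 1 σ⁻¹) ^ ρ :=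
              Real.rpow_le_rpow (by positivity) h3 hρ0.le
            have h5 := mul_le_mul_of_nonneg_left h4
              (mul_nonneg hC₂0 (hQ0 (σ * u + μ)))
            rw [hC₅]
            calc Q u ≤ C₂ * Q (σ * u + μ) * (u / (σ * u + μ)) ^ ρ := h2
              _ ≤ C₂ * Q (σ * u + μ) * (max 1 σ⁻¹) ^ ρ := h5
              _ = C₂ * (max 1 σ⁻¹) ^ ρ * Q (σ * u + μ) := by ring
        have hp : (0:ℝ) < (t / u) ^ ρ := Real.rpow_pos_of_pos (by positivity) ρ
        have hlogu : 0 ≤ Real.log u := Real.log_nonneg hu1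
        have h7 : Q u ≤ C₅ * (u ^ 2 / t + 2 * Real.log u) := by
          have := mul_le_mul_of_nonneg_left hQv hC₅0
          linarith
        have h8 : C₂ * Q u * (t / u) ^ ρ
            ≤ C₂ * (C₅ * (u ^ 2 / t + 2 * Real.log u)) * (t / u) ^ ρ :=
          mul_le_mul_of_nonneg_right (mul_le_mul_of_nonneg_left h7 hC₂0) hp.le
        have h6 : Q t ≤ C₆ * (u ^ 2 / t) * (t / u) ^ ρ
            + C₆ * (2 * Real.log u) * (t / u) ^ ρ := by
          calc Q t ≤ C₂ * Q u * (t / u) ^ ρ := hcomp u t hT₀u hutt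
            _ ≤ C₂ * (C₅ * (u ^ 2 / t + 2 * Real.log u)) * (t / u) ^ ρ := h8
            _ = C₂ * C₅ * (u ^ 2 / t) * (t / u) ^ ρ
                + C₂ * C₅ * (2 * Real.log u) * (t / u) ^ ρ := by ring
            _ = C₆ * (u ^ 2 / t) * (t / u) ^ ρ
                + C₆ * (2 * Real.log u) * (t / u) ^ ρ := by rw [hC₆]
        have hb1 : C₆ * (u ^ 2 / t) * (t / u) ^ ρ ≤ ε / 4 * u :=
          term1_bound hρ0 hρ1 he ht1 hu1 hut2 hC₆0 hC
        have hb2 : C₆ * (2 * Real.log u) * (t / u) ^ ρ ≤ ε / 4 * u :=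
          term2_bound hρ0 hρ1 he ht1 hu1 hsq hutt hC₆0 hD
        linarith
    have hfin := ratio_le_of_forall (bfun (QtOf Q μ σ)) t (half_pos hε) (hQ0 t) key
    have hL0 : 0 ≤ rInv (bfun (QtOf Q μ σ)) t := Real.sInf_nonneg (fun x hx => hx.1)
    rw [Real.norm_eq_abs, abs_of_nonneg (div_nonneg (hQ0 t) hL0)]
    linarith
  -- Goal 3
  · rw [NormedAddCommGroup.tendsto_nhds_zero]
    intro ε hε
    have evE : ∀ᶠ t : ℝ in atTop, 16 / ε ^ 2 ≤ Q (Real.sqrt t) :=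
      (hQinf.comp hsqrt_tendsto).eventually_ge_atTop _
    filter_upwards [evE, eventually_ge_atTop (1:ℝ)] with t hE ht1
    have ht0 : (0:ℝ) < t := lt_of_lt_of_le one_pos ht1
    have key : ∀ u : ℝ, 0 ≤ u → t ≤ omega1 Q u → Real.sqrt t ≤ (ε / 2) * u := by
      intro u hu0 hut
      rw [omega1] at hut
      obtain ⟨hu2, hsq⟩ := mem_facts Q t u ht0.le hu0 hut
      have hQu : Q (Real.sqrt t) ≤ Q u := hmono hsq
      have hmax : 16 / ε ^ 2 ≤ max (Q u) 1 :=
        le_trans (le_trans hE hQu) (le_max_left _ _)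
      have hsq2 : ((4 / ε) * Real.sqrt t) ^ 2 ≤ u ^ 2 := by
        rw [mul_pow, Real.sq_sqrt ht0.le]
        have h1 : t * (16 / ε ^ 2) ≤ t * max (Q u) 1 :=
          mul_le_mul_of_nonneg_left hmax ht0.le
        have h16 : (4 / ε) ^ 2 = 16 / ε ^ 2 := by
          rw [div_pow]; norm_num
        rw [h16]
        calc 16 / ε ^ 2 * t = t * (16 / ε ^ 2) := by ring
          _ ≤ t * max (Q u) 1 := h1
          _ ≤ u ^ 2 := hu2
      have hle : (4 / ε) * Real.sqrt t ≤ u := by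
        have h2 := Real.sqrt_le_sqrt hsq2
        rwa [Real.sqrt_sq (mul_nonneg (div_nonneg (by norm_num) hε.le)
          (Real.sqrt_nonneg t)), Real.sqrt_sq hu0] at h2
      have hmul := mul_le_mul_of_nonneg_left hle (by linarith : (0:ℝ) ≤ ε / 4)
      have hεne : ε ≠ 0 := ne_of_gt hε
      have heq : ε / 4 * ((4 / ε) * Real.sqrt t) = Real.sqrt t := by
        field_simp
      rw [heq] at hmul
      nlinarith [Real.sqrt_nonneg t, mul_nonneg hε.le hu0]
    have hfin := ratio_le_of_forall (omega1 Q) t (half_pos hε)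
      (Real.sqrt_nonneg t) key
    have hL0 : 0 ≤ rInv (omega1 Q) t := Real.sInf_nonneg (fun x hx => hx.1)
    rw [Real.norm_eq_abs, abs_of_nonneg (div_nonneg (Real.sqrt_nonneg t) hL0)]
    linarith

set_option maxHeartbeats 1000000 in
lemma aux_stmt
    {Ω : Type} [MeasurableSpace Ω] (P : MeasureTheory.Measure Ω) [IsProbabilityMeasure P]
    (X : ℕ → Ω → ℝ) (hXmeas : ∀ i, Measurable (X i))
    (Fbar : ℝ → ℝ) (hFbar : ∀ x : ℝ, Fbar x = (P {ω | x < X 0 ω}).toReal)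
    (hsubexp : Tendsto (fun x : ℝ => (P {ω | x < X 0 ω + X 1 ω}).toReal / Fbar x)
      atTop (nhds 2))
    (Q : ℝ → ℝ) (hQdef : ∀ t : ℝ, Q t = -Real.log (Fbar t))
    (q : ℝ → ℝ) (hq : ∀ t : ℝ, Q t = ∫ s in (0:ℝ)..t, q s)
    (r : ℝ)
    (hr : Filter.limsup (fun t : ℝ => ((t * q t / Q t : ℝ) : EReal)) atTop = (r : EReal))
    (hr0 : 0 ≤ r) (hr1 : r < 1)
    (μ : ℝ) (hμpos : 0 < μ)
    (σ : ℝ) (hσpos : 0 < σ) :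
    Tendsto (fun t : ℝ => Q t / rInv (omega1 Q) t) atTop (nhds 0) ∧
    Tendsto (fun t : ℝ => Q t / rInv (bfun (QtOf Q μ σ)) t) atTop (nhds 0) ∧
    Tendsto (fun t : ℝ => Real.sqrt t / rInv (omega1 Q) t) atTop (nhds 0) := by
  -- basic facts about Fbar
  have hFnonneg : ∀ x : ℝ, 0 ≤ Fbar x := by
    intro x; rw [hFbar]; exact ENNReal.toReal_nonneg
  have hFanti : Antitone Fbar := by
    intro x y hxy
    rw [hFbar, hFbar]
    refine ENNReal.toReal_mono (measure_ne_top P _) (measure_mono ?_)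
    intro ω hω
    exact lt_of_le_of_lt hxy hω
  have hF1 : ∀ x : ℝ, Fbar x ≤ 1 := by
    intro x
    rw [hFbar]
    have h1 : P {ω | x < X 0 ω} ≤ 1 := prob_le_one
    have := ENNReal.toReal_mono (by simp) h1
    simpa using this
  -- Fbar tends to 0
  have hFto0 : Tendsto Fbar atTop (nhds 0) := by
    have hmeasn : ∀ n : ℕ, MeasurableSet {ω | (n : ℝ) < X 0 ω} :=
      fun n => measurableSet_lt measurable_const (hXmeas 0)
    have hanti : Antitone (fun n : ℕ => {ω | (n : ℝ) < X 0 ω}) := by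
      intro m n hmn ω hω
      simp only [Set.mem_setOf_eq] at hω ⊢
      exact lt_of_le_of_lt (by exact_mod_cast hmn : (m:ℝ) ≤ (n:ℝ)) hω
    have hint : ⋂ n : ℕ, {ω | (n : ℝ) < X 0 ω} = ∅ := by
      ext ω
      simp only [Set.mem_iInter, Set.mem_setOf_eq, Set.mem_empty_iff_false, iff_false,
        not_forall, not_lt]
      obtain ⟨n, hn⟩ := exists_nat_gt (X 0 ω)
      exact ⟨n, hn.le⟩
    have h0 : Tendsto (fun n : ℕ => P {ω | (n : ℝ) < X 0 ω}) atTop (nhds 0) := by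
      have := MeasureTheory.tendsto_measure_iInter_atTop (μ := P)
        (s := fun n : ℕ => {ω | (n : ℝ) < X 0 ω})
        (fun n => (hmeasn n).nullMeasurableSet) hanti ⟨0, measure_ne_top P _⟩
      rwa [hint, measure_empty] at this
    have h1 : Tendsto (fun n : ℕ => Fbar n) atTop (nhds 0) := by
      have h2 := (ENNReal.tendsto_toReal (by simp : (0:ℝ≥0∞) ≠ ⊤)).comp h0
      simp only [Function.comp, ENNReal.toReal_zero] at h2
      refine h2.congr fun n => ?_
      simp [Function.comp, hFbar]
    rw [NormedAddCommGroup.tendsto_nhds_zero]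
    intro ε hε
    obtain ⟨N, hN⟩ := eventually_atTop.mp (h1.eventually_lt_const hε)
    filter_upwards [eventually_ge_atTop ((N : ℝ))] with x hx
    rw [Real.norm_eq_abs, abs_of_nonneg (hFnonneg x)]
    exact lt_of_le_of_lt (hFanti hx) (hN N le_rfl)
  -- Fbar is everywhere positive
  have hFpos : ∀ x : ℝ, 0 < Fbar x := by
    have hev : ∀ᶠ x : ℝ in atTop,
        1 < (P {ω | x < X 0 ω + X 1 ω}).toReal / Fbar x :=
      hsubexp.eventually_const_lt (by norm_num)
    obtain ⟨x₀, hx₀⟩ := eventually_atTop.mp hev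
    intro x
    have hy : 0 < Fbar (max x x₀) := by
      rcases lt_or_eq_of_le (hFnonneg (max x x₀)) with h | h
      · exact h
      · exfalso
        have := hx₀ (max x x₀) (le_max_right _ _)
        rw [← h, div_zero] at this
        linarith
    exact lt_of_lt_of_le hy (hFanti (le_max_left _ _))
  -- Q monotone, nonnegative, tends to infinity
  have hQmono : Monotone Q := by
    intro x y hxy
    rw [hQdef, hQdef]
    have := Real.log_le_log (hFpos y) (hFanti hxy)
    linarith
  have hQ0 : ∀ t : ℝ, 0 ≤ Q t := by
    intro t
    rw [hQdef]
    have := Real.log_nonpos (hFnonneg t) (hF1 t)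
    linarith
  have hQinf : Tendsto Q atTop atTop := by
    have h1 : Tendsto Fbar atTop (nhdsWithin 0 {0}ᶜ) := by
      rw [tendsto_nhdsWithin_iff]
      exact ⟨hFto0, Eventually.of_forall fun t => ne_of_gt (hFpos t)⟩
    have h2 : Tendsto (fun t => Real.log (Fbar t)) atTop atBot :=
      Real.tendsto_log_nhdsNE_zero.comp h1
    have h3 : Tendsto (fun t => -Real.log (Fbar t)) atTop atTop :=
      tendsto_neg_atBot_atTop.comp h2
    exact h3.congr fun t => (hQdef t).symm
  -- integrability of q
  have hInt : ∀ b : ℝ, 0 ≤ b → IntervalIntegrable q volume 0 b := by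
    intro b hb0
    by_contra hcon
    obtain ⟨T, hT⟩ := eventually_atTop.mp (hQinf.eventually_ge_atTop 1)
    have hbig : Q (max b T) = 0 := by
      rw [hq]
      apply intervalIntegral.integral_undef
      intro hI
      exact hcon (hI.mono (Set.uIcc_subset_uIcc
        (by rw [Set.uIcc_of_le (le_trans hb0 (le_max_left b T))]
            exact ⟨le_rfl, le_trans hb0 (le_max_left b T)⟩)
        (by rw [Set.uIcc_of_le (le_trans hb0 (le_max_left b T))]
            exact ⟨hb0, le_max_left b T⟩)) le_rfl)
    have := hT (max b T) (le_max_right b T)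
    linarith
  -- the hazard-rate bound
  obtain ⟨r', hr'⟩ : ∃ r' : ℝ, r' = (1 + r) / 2 := ⟨_, rfl⟩
  have hr'0 : 0 < r' := by rw [hr']; linarith
  have hr'1 : r' < 1 := by rw [hr']; linarith
  obtain ⟨r'', hr''⟩ : ∃ r'' : ℝ, r'' = (1 + r') / 2 := ⟨_, rfl⟩
  have hr''0 : 0 < r'' := by rw [hr'']; linarith
  have hr''1 : r'' < 1 := by rw [hr'']; linarith
  have hr'r'' : r' < r'' := by rw [hr'']; linarith
  obtain ⟨c, hcdef⟩ : ∃ c : ℝ, c = (r'' - r') / (r' * r'') := ⟨_, rfl⟩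
  have hc : 0 < c := by rw [hcdef]; exact div_pos (by linarith) (by positivity)
  have hrc : r' * c = 1 - r' / r'' := by
    rw [hcdef]; field_simp
  have hlt : Filter.limsup (fun t : ℝ => ((t * q t / Q t : ℝ) : EReal)) atTop
      < ((r' : ℝ) : EReal) := by
    rw [hr]
    exact EReal.coe_lt_coe_iff.mpr (by rw [hr']; linarith)
  have hev1 := eventually_lt_of_limsup_lt hlt
  obtain ⟨T₁, hT₁⟩ := eventually_atTop.mp
    (hev1.and ((hQinf.eventually_ge_atTop 1).and (eventually_ge_atTop (1:ℝ))))
  have hqb : ∀ s : ℝ, T₁ ≤ s → q s ≤ r' * Q s / s := by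
    intro s hs
    obtain ⟨h1, h2, h3⟩ := hT₁ s hs
    have h1' : s * q s / Q s < r' := EReal.coe_lt_coe_iff.mp h1
    have hQpos : (0:ℝ) < Q s := by linarith
    have hs0 : (0:ℝ) < s := by linarith
    rw [div_lt_iff₀ hQpos] at h1'
    rw [le_div_iff₀ hs0]
    nlinarith
  -- parameters T₀
  obtain ⟨T₀, hT₀def⟩ : ∃ T₀ : ℝ, T₀ = max T₁ 1 := ⟨_, rfl⟩
  have hT₀1 : 1 ≤ T₀ := by rw [hT₀def]; exact le_max_right _ _
  have hT₀T₁ : T₁ ≤ T₀ := by rw [hT₀def]; exact le_max_left _ _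
  have hQT₀ : 1 ≤ Q T₀ := (hT₁ T₀ hT₀T₁).2.1
  -- the one-step Gronwall bound
  have hstep : ∀ a : ℝ, T₀ ≤ a → Q (a * Real.exp c) ≤ Q a * Real.exp (r'' * c) := by
    intro a ha
    have ha1 : 1 ≤ a := le_trans hT₀1 ha
    have ha0 : (0:ℝ) < a := by linarith
    have hexp1 : (1:ℝ) ≤ Real.exp c := Real.one_le_exp hc.le
    have hb : a ≤ a * Real.exp c := by nlinarith
    have hb0 : (0:ℝ) ≤ a * Real.exp c := by positivity
    have hIab : IntervalIntegrable q volume a (a * Real.exp c) :=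
      (hInt _ hb0).mono (Set.uIcc_subset_uIcc
        (by rw [Set.uIcc_of_le hb0]; exact ⟨ha0.le, hb⟩)
        (by rw [Set.uIcc_of_le hb0]; exact ⟨hb0, le_rfl⟩)) le_rfl
    have hsub : Q (a * Real.exp c) - Q a = ∫ s in a..(a * Real.exp c), q s := by
      rw [hq, hq]
      exact intervalIntegral.integral_interval_sub_left (hInt _ hb0) (hInt a ha0.le)
    have hcont : ContinuousOn (fun s : ℝ => r' * Q (a * Real.exp c) / s)
        (Set.uIcc a (a * Real.exp c)) := by
      apply ContinuousOn.div continuousOn_const continuousOn_id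
      intro x hx
      rw [Set.uIcc_of_le hb] at hx
      exact ne_of_gt (lt_of_lt_of_le ha0 hx.1)
    have hIg : IntervalIntegrable (fun s : ℝ => r' * Q (a * Real.exp c) / s) volume a (a * Real.exp c) := hcont.intervalIntegrable
    have hmono_int : (∫ s in a..(a * Real.exp c), q s)
        ≤ ∫ s in a..(a * Real.exp c), r' * Q (a * Real.exp c) / s := by
      apply intervalIntegral.integral_mono_on hb hIab hIg
      intro x hx
      have hx0 : (0:ℝ) < x := lt_of_lt_of_le ha0 hx.1
      have h1 := hqb x (le_trans hT₀T₁ (le_trans ha hx.1))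
      have h2 : Q x ≤ Q (a * Real.exp c) := hQmono hx.2
      have h3 : r' * Q x / x ≤ r' * Q (a * Real.exp c) / x := by
        gcongr
      linarith
    have hval : (∫ s in a..(a * Real.exp c), r' * Q (a * Real.exp c) / s)
        = r' * Q (a * Real.exp c) * c := by
      have h1 : (fun s : ℝ => r' * Q (a * Real.exp c) / s)
          = fun s : ℝ => r' * Q (a * Real.exp c) * (1 / s) := by
        funext s; ring
      rw [h1, intervalIntegral.integral_const_mul, integral_one_div
        (by rw [Set.uIcc_of_le hb]; intro hmem; linarith [hmem.1])]
      congr 1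
      rw [mul_comm a (Real.exp c), mul_div_assoc, div_self (ne_of_gt ha0), mul_one,
        Real.log_exp]
    have hkey : Q (a * Real.exp c) - Q a ≤ r' * Q (a * Real.exp c) * c := by
      rw [hsub]; linarith
    -- solve for Q(a exp c)
    have hr''ne : r'' ≠ 0 := ne_of_gt hr''0
    have hfrac : Q (a * Real.exp c) * (r' / r'') ≤ Q a := by
      have h0 : 1 - r' * c = r' / r'' := by rw [hrc]; ring
      rw [← h0]
      nlinarith [hkey]
    have h4 : Q (a * Real.exp c) ≤ Q a * (r'' / r') := by
      have h5 := mul_le_mul_of_nonneg_right hfrac (by positivity : (0:ℝ) ≤ r'' / r')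
      have h6 : Q (a * Real.exp c) * (r' / r'') * (r'' / r') = Q (a * Real.exp c) := by
        field_simp
      rw [h6] at h5
      exact h5
    have hfe : r'' / r' ≤ Real.exp (r'' * c) := by
      have hl := Real.log_le_sub_one_of_pos (by positivity : (0:ℝ) < r'' / r')
      have heq : r'' / r' - 1 = r'' * c := by
        rw [hcdef]; field_simp
      calc r'' / r' = Real.exp (Real.log (r'' / r')) :=
            (Real.exp_log (by positivity)).symm
        _ ≤ Real.exp (r'' * c) := Real.exp_le_exp.mpr (by linarith)
    calc Q (a * Real.exp c) ≤ Q a * (r'' / r') := h4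
      _ ≤ Q a * Real.exp (r'' * c) := mul_le_mul_of_nonneg_left hfe (hQ0 a)
  -- assemble
  have hcomp := comp_of_step Q T₀ c r'' hQmono hQ0 hc hr''0.le (by linarith) hstep
  exact key_abstract Q T₀ (Real.exp (r'' * c)) r'' μ σ hQmono hQ0 hT₀1 hQT₀ hr''0 hr''1
    (Real.one_le_exp (by positivity))
    (fun u t h1 h2 => hcomp u t h1 h2 (lt_of_lt_of_le one_pos (le_trans hT₀1 h1)))
    hQinf hμpos hσpos

/-- Lemma 9: under Assumption 1, with `Q̃(t) = Q(σt+μ) − 2 log t`,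
`b(t) = t²/(Q̃(t) ∨ 1)` and `ω₁(t) = t²/(Q(t) ∨ 1)`:
(a) `Q(t)/ω₁⁻¹(t) → 0` and `Q(t)/b⁻¹(t) → 0`; (b) `√t/ω₁⁻¹(t) → 0` as `t → ∞`. -/
theorem stmt10
    {Ω : Type} [MeasurableSpace Ω] (P : MeasureTheory.Measure Ω) [IsProbabilityMeasure P]
    (X : ℕ → Ω → ℝ) (hXmeas : ∀ i, Measurable (X i))
    (hXindep : iIndepFun X P)
    (hXident : ∀ i, IdentDistrib (X i) (X 0) P P)
    (hXpos : ∀ᵐ ω ∂P, 0 ≤ X 0 ω)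
    (Fbar : ℝ → ℝ) (hFbar : ∀ x : ℝ, Fbar x = (P {ω | x < X 0 ω}).toReal)
    (hsubexp : Tendsto (fun x : ℝ => (P {ω | x < X 0 ω + X 1 ω}).toReal / Fbar x)
      atTop (nhds 2))
    (Q : ℝ → ℝ) (hQdef : ∀ t : ℝ, Q t = -Real.log (Fbar t))
    (q : ℝ → ℝ) (hq : ∀ t : ℝ, Q t = ∫ s in (0:ℝ)..t, q s)
    (r : ℝ)
    (hr : Filter.limsup (fun t : ℝ => ((t * q t / Q t : ℝ) : EReal)) atTop = (r : EReal))
    (hr0 : 0 ≤ r) (hr1 : r < 1)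
    (hliminf : ((if r = 0 then (2 : ℝ) else 4 / (1 - r)) : EReal) <
        Filter.liminf (fun t : ℝ => ((t * q t : ℝ) : EReal)) atTop)
    (μ : ℝ) (hμ : μ = ∫ ω, X 0 ω ∂P) (hμpos : 0 < μ)
    (σ : ℝ) (hσ : σ ^ 2 = ∫ ω, (X 0 ω - μ) ^ 2 ∂P) (hσpos : 0 < σ)
    :
    Tendsto (fun t : ℝ => Q t / rInv (omega1 Q) t) atTop (nhds 0) ∧
    Tendsto (fun t : ℝ => Q t / rInv (bfun (QtOf Q μ σ)) t) atTop (nhds 0) ∧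
    Tendsto (fun t : ℝ => Real.sqrt t / rInv (omega1 Q) t) atTop (nhds 0) := by
  exact aux_stmt P X hXmeas Fbar hFbar hsubexp Q hQdef q hq r hr hr0 hr1 μ hμpos σ hσpos

end
end

section
/- Suppose Assumption 1 holds. Let h_κ(x)=ω₁⁻¹(x) if κ=2 and h_κ(x)=√(x log x) if κ>2. Then there exists a constant C>0 such that, for all sufficiently large x and all ρ∈(0,1), E₂(ρ,x) ≤ (C√x / h_κ(x)) ρ^{(x−h_κ(x))/μ} e^{−μ h_κ(x)²/(2σ²x)} + (1−ρ) E[ρ^{a(x,Z)} 𝟙(σZ ≤ √μ h_κ(x)/√x)]. -/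
open MeasureTheory ProbabilityTheory Filter Finset
open scoped ENNReal NNReal Classical

noncomputable section

section AuxLemmas

lemma stdPdf_nonneg (z : ℝ) : 0 ≤ stdPdf z := by
  unfold stdPdf; positivity

lemma gauss_toReal (s : Set ℝ) :
    (gaussianReal 0 1 s).toReal = ∫ z in s, stdPdf z := by
  rw [gaussianReal_apply_eq_integral 0 one_ne_zero s,
    ENNReal.toReal_ofReal (integral_nonneg fun z => gaussianPDFReal_nonneg 0 1 z)]
  refine (integral_congr_ae (ae_of_all _ fun z => ?_))
  simp [stdPdf, gaussianPDFReal]; rw [div_eq_inv_mul]; ring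

lemma stdCdf_neg (u : ℝ) : stdCdf (-u) = (gaussianReal 0 1 (Set.Ici u)).toReal := by
  rw [gauss_toReal, stdCdf]
  have : (∫ t in Set.Iic (-u), stdPdf t) = ∫ t in Set.Iic (-u), stdPdf (-t) := by
    refine integral_congr_ae (ae_of_all _ fun z => ?_)
    simp [stdPdf]
  rw [this, integral_comp_neg_Iic, neg_neg, ← integral_Ici_eq_integral_Ioi]

lemma integrable_mulexp : Integrable (fun z : ℝ => z * Real.exp (-z ^ 2 / 2)) := by
  have := integrable_mul_exp_neg_mul_sq (b := (1:ℝ)/2) (by norm_num)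
  refine this.congr ?_
  exact ae_of_all _ fun z => by ring_nf

lemma integral_Ioi_mulexp (t : ℝ) :
    ∫ z in Set.Ioi t, z * Real.exp (-z ^ 2 / 2) = Real.exp (-t ^ 2 / 2) := by
  have hderiv : ∀ z ∈ Set.Ici t, HasDerivAt (fun z : ℝ => -Real.exp (-z ^ 2 / 2))
      (z * Real.exp (-z ^ 2 / 2)) z := by
    intro z _
    have h1 : HasDerivAt (fun z : ℝ => -z ^ 2 / 2) (-z) z := by
      have := ((hasDerivAt_pow 2 z).neg).div_const 2
      simpa using this.congr_deriv (by push_cast; ring)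
    have := (h1.exp).neg
    exact this.congr_deriv (by ring)
  have htend : Tendsto (fun z : ℝ => -Real.exp (-z ^ 2 / 2)) atTop (nhds 0) := by
    rw [← neg_zero]
    refine Tendsto.neg ?_
    refine Real.tendsto_exp_atBot.comp ?_
    have hsq : Tendsto (fun z : ℝ => z ^ 2 / 2) atTop atTop := by
      exact (tendsto_pow_atTop (by norm_num)).atTop_div_const (by norm_num)
    have h2 := tendsto_neg_atTop_atBot.comp hsq
    refine h2.congr fun z => by simp [Function.comp]; ring
  have := integral_Ioi_of_hasDerivAt_of_tendsto' hderiv integrable_mulexp.integrableOn htend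
  rw [this]; ring

lemma gauss_tail {t : ℝ} (ht : 0 < t) :
    (gaussianReal 0 1 (Set.Ioi t)).toReal
      ≤ Real.exp (-t ^ 2 / 2) / (t * Real.sqrt (2 * Real.pi)) := by
  have hpdf_int : Integrable stdPdf := by
    have : stdPdf = gaussianPDFReal 0 1 := by
      funext z; simp [stdPdf, gaussianPDFReal]; rw [div_eq_inv_mul]; ring
    rw [this]; exact integrable_gaussianPDFReal 0 1
  have hsq : 0 < Real.sqrt (2 * Real.pi) := Real.sqrt_pos.2 (by positivity)
  rw [gauss_toReal]
  have hmono : (∫ z in Set.Ioi t, stdPdf z)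
      ≤ ∫ z in Set.Ioi t, (1 / (t * Real.sqrt (2 * Real.pi))) * (z * Real.exp (-z ^ 2 / 2)) := by
    refine setIntegral_mono_on hpdf_int.integrableOn ?_ measurableSet_Ioi ?_
    · refine (integrable_mulexp.const_mul _).integrableOn
    · intro z hz
      have hz' : t < z := hz
      have h1 : 1 ≤ z / t := (one_le_div ht).2 hz'.le
      have : stdPdf z ≤ (z / t) * stdPdf z := by
        nlinarith [stdPdf_nonneg z]
      refine this.trans (le_of_eq ?_)
      have ht' : t ≠ 0 := ht.ne'
      have hsq' : Real.sqrt (2 * Real.pi) ≠ 0 := hsq.ne'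
      simp only [stdPdf]
      field_simp
  rw [integral_const_mul, integral_Ioi_mulexp] at hmono
  rw [div_eq_mul_inv, mul_comm]
  simpa [div_eq_inv_mul, one_div] using hmono

lemma hasSum_tail_geom {ρ : ℝ} (h0 : 0 ≤ ρ) (h1 : ρ < 1) (k : ℕ) :
    HasSum (fun n : ℕ => if k ≤ n then (1 - ρ) * ρ ^ n else 0) (ρ ^ k) := by
  have hne : (1 : ℝ) - ρ ≠ 0 := by linarith
  have base := (hasSum_geometric_of_lt_one h0 h1).mul_left ((1 - ρ) * ρ ^ k)
  have hval : (1 - ρ) * ρ ^ k * (1 - ρ)⁻¹ = ρ ^ k := by field_simp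
  rw [hval] at base
  have hinj : Function.Injective (fun m : ℕ => k + m) := fun a b h => by
    simpa using h
  refine (Function.Injective.hasSum_iff hinj ?_).1 ?_
  · intro n hn
    have hnk : n < k := by
      by_contra hc
      exact hn ⟨n - k, by simp at hc ⊢; omega⟩
    simp [Nat.not_le.2 hnk]
  · refine base.congr_fun fun m => ?_
    simp only [Function.comp]
    rw [if_pos (by omega : k ≤ k + m), pow_add]
    ring

lemma Q_sub_linear (Q q : ℝ → ℝ) (t₀ r'' : ℝ) (h1t₀ : 1 ≤ t₀) (hr0 : 0 < r'') (hr1 : r'' < 1)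
    (hQpos : 0 < Q t₀)
    (hQnn : ∀ t, t₀ ≤ t → 0 ≤ Q t)
    (hmono : ∀ s t, t₀ ≤ s → s ≤ t → Q s ≤ Q t)
    (hsum : ∀ s t, t₀ ≤ s → s ≤ t → Q t = Q s + ∫ u in s..t, q u)
    (hint : ∀ s t, t₀ ≤ s → s ≤ t → IntervalIntegrable q volume s t)
    (hbd : ∀ t, t₀ ≤ t → t * q t ≤ r'' * Q t) :
    ∀ᶠ x in atTop, Q x ≤ x := by
  have ht₀0 : 0 < t₀ := lt_of_lt_of_le zero_lt_one h1t₀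
  set δ := (1 - r'') / (2 * r'') with hδdef
  have hδ : 0 < δ := by rw [hδdef]; apply div_pos <;> linarith
  set ε := r'' * δ with hεdef
  have hεval : ε = (1 - r'') / 2 := by rw [hεdef, hδdef]; field_simp
  have hε0 : 0 < ε := by rw [hεval]; linarith
  have hε1 : ε < 1 := by rw [hεval]; linarith
  have h1ε : 0 < 1 - ε := by linarith
  set cc := (1 - ε)⁻¹ with hcc
  have hcc0 : 0 < cc := by rw [hcc]; positivity
  have hcc1 : 1 ≤ cc := by
    rw [hcc, le_inv_comm₀ zero_lt_one h1ε]
    simp; linarith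
  have hclt : cc < 1 + δ := by
    rw [hcc, inv_eq_one_div, div_lt_iff₀ h1ε]
    have : ε * (1 + δ) < δ := by
      have h2 : 1 + δ < 1 / r'' := by
        rw [lt_div_iff₀ hr0, hδdef]
        have hh : (1 + (1 - r'') / (2 * r'')) * r'' = r'' + (1 - r'') / 2 := by
          field_simp
        rw [hh]; linarith
      calc ε * (1 + δ) < ε * (1 / r'') := by
            exact mul_lt_mul_of_pos_left h2 hε0
        _ = δ := by rw [hεdef]; field_simp
    nlinarith
  have step : ∀ T, t₀ ≤ T → Q (T * (1 + δ)) ≤ cc * Q T := by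
    intro T hT
    have hT0 : 0 < T := lt_of_lt_of_le ht₀0 hT
    have hTT' : T ≤ T * (1 + δ) := by nlinarith
    have hQT' : Q (T * (1 + δ)) = Q T + ∫ u in T..(T * (1 + δ)), q u := hsum _ _ hT hTT'
    have hQT'nn : 0 ≤ Q (T * (1 + δ)) := hQnn _ (hT.trans hTT')
    have hptbd : ∀ s ∈ Set.Icc T (T * (1 + δ)), q s ≤ r'' * Q (T * (1 + δ)) / T := by
      intro s hs
      have hs0 : 0 < s := lt_of_lt_of_le hT0 hs.1
      have hst₀ : t₀ ≤ s := hT.trans hs.1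
      have h1 : s * q s ≤ r'' * Q s := hbd s hst₀
      have h2 : Q s ≤ Q (T * (1 + δ)) := hmono s _ hst₀ hs.2
      have h3 : q s ≤ r'' * Q (T * (1 + δ)) / s := by
        rw [le_div_iff₀ hs0]
        nlinarith
      refine h3.trans ?_
      have hnum : 0 ≤ r'' * Q (T * (1 + δ)) := by positivity
      gcongr
      exact hs.1
    have hintbd : (∫ u in T..(T * (1 + δ)), q u)
        ≤ (T * (1 + δ) - T) * (r'' * Q (T * (1 + δ)) / T) := by
      have h1 := intervalIntegral.integral_mono_on hTT' (hint _ _ hT hTT')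
        intervalIntegrable_const hptbd
      rw [intervalIntegral.integral_const, smul_eq_mul] at h1
      exact h1
    have hkey : Q (T * (1 + δ)) ≤ Q T + ε * Q (T * (1 + δ)) := by
      have he : (T * (1 + δ) - T) * (r'' * Q (T * (1 + δ)) / T) = ε * Q (T * (1 + δ)) := by
        rw [hεdef]
        field_simp
        ring
      rw [he] at hintbd
      linarith [hQT', hintbd]
    have : (1 - ε) * Q (T * (1 + δ)) ≤ Q T := by linarith [hkey]
    calc Q (T * (1 + δ)) = cc * ((1 - ε) * Q (T * (1 + δ))) := by
          rw [hcc]; field_simp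
      _ ≤ cc * Q T := by exact mul_le_mul_of_nonneg_left this hcc0.le
  have h1δ : (1:ℝ) < 1 + δ := by linarith
  have iter : ∀ k : ℕ, Q (t₀ * (1 + δ) ^ k) ≤ Q t₀ * cc ^ k := by
    intro k
    induction k with
    | zero => simp
    | succ k ih =>
      have hTk : t₀ ≤ t₀ * (1 + δ) ^ k :=
        le_mul_of_one_le_right ht₀0.le (one_le_pow₀ h1δ.le)
      have hstep := step _ hTk
      have harg : t₀ * (1 + δ) ^ k * (1 + δ) = t₀ * (1 + δ) ^ (k + 1) := by
        rw [pow_succ]; ring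
      rw [harg] at hstep
      calc Q (t₀ * (1 + δ) ^ (k + 1)) ≤ cc * Q (t₀ * (1 + δ) ^ k) := hstep
        _ ≤ cc * (Q t₀ * cc ^ k) := mul_le_mul_of_nonneg_left ih hcc0.le
        _ = Q t₀ * cc ^ (k + 1) := by rw [pow_succ]; ring
  have hratio0 : 0 ≤ cc / (1 + δ) := by positivity
  have hratio1 : cc / (1 + δ) < 1 := (div_lt_one (by linarith)).2 hclt
  obtain ⟨K, hK⟩ := exists_pow_lt_of_lt_one
    (show 0 < t₀ / (Q t₀ * cc) by positivity) hratio1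
  filter_upwards [eventually_ge_atTop (t₀ * (1 + δ) ^ (K + 1))] with x hxK
  have hxt₀ : t₀ ≤ x := le_trans (le_mul_of_one_le_right ht₀0.le (one_le_pow₀ h1δ.le)) hxK
  have hex : ∃ k : ℕ, x < t₀ * (1 + δ) ^ (k + 1) := by
    obtain ⟨n, hn⟩ := pow_unbounded_of_one_lt x h1δ
    refine ⟨n, lt_of_lt_of_le hn ?_⟩
    have ha : (1 + δ) ^ n ≤ (1 + δ) ^ (n + 1) := pow_le_pow_right₀ h1δ.le (Nat.le_succ n)
    have hb : (1 + δ) ^ (n + 1) ≤ t₀ * (1 + δ) ^ (n + 1) :=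
      le_mul_of_one_le_left (pow_nonneg (by linarith) _) h1t₀
    linarith
  set k := Nat.find hex with hkdef
  have hk1 : x < t₀ * (1 + δ) ^ (k + 1) := Nat.find_spec hex
  have hk2 : t₀ * (1 + δ) ^ k ≤ x := by
    rcases Nat.eq_zero_or_pos k with hk0 | hkpos
    · rw [hk0]; simpa using hxt₀
    · have := Nat.find_min hex (m := k - 1) (by omega)
      push_neg at this
      have harg : k - 1 + 1 = k := by omega
      rwa [harg] at this
  have hkK : K ≤ k := by
    by_contra hcon
    push_neg at hcon
    have h1 : t₀ * (1 + δ) ^ (k + 1) ≤ t₀ * (1 + δ) ^ (K + 1) := by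
      have := pow_le_pow_right₀ h1δ.le (show k + 1 ≤ K + 1 by omega)
      nlinarith
    linarith
  have hmain : Q t₀ * cc ^ (k + 1) ≤ t₀ * (1 + δ) ^ k := by
    have hKk : (cc / (1 + δ)) ^ k ≤ (cc / (1 + δ)) ^ K :=
      pow_le_pow_of_le_one hratio0 hratio1.le hkK
    have h2 : (cc / (1 + δ)) ^ k < t₀ / (Q t₀ * cc) := lt_of_le_of_lt hKk hK
    have h3 : (cc / (1 + δ)) ^ k * (Q t₀ * cc) < t₀ := by
      rw [← lt_div_iff₀ (by positivity)]
      exact h2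
    have h4 : cc ^ k = (cc / (1 + δ)) ^ k * (1 + δ) ^ k := by
      rw [div_pow]
      field_simp
    have hpk : (0:ℝ) < (1 + δ) ^ k := pow_pos (by linarith) k
    calc Q t₀ * cc ^ (k + 1) = ((cc / (1 + δ)) ^ k * (Q t₀ * cc)) * (1 + δ) ^ k := by
          rw [pow_succ, h4]; ring
      _ ≤ t₀ * (1 + δ) ^ k := mul_le_mul_of_nonneg_right h3.le hpk.le
  calc Q x ≤ Q (t₀ * (1 + δ) ^ (k + 1)) := hmono _ _ hxt₀ hk1.le
    _ ≤ Q t₀ * cc ^ (k + 1) := iter (k + 1)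
    _ ≤ t₀ * (1 + δ) ^ k := hmain
    _ ≤ x := hk2

lemma key_bound (μ σ ρ x h : ℝ) (hμ : 0 < μ) (hσ : 0 < σ) (hρ0 : 0 < ρ) (hρ1 : ρ < 1)
    (hx : 0 < x) (hh0 : 0 < h) (hhx : h ≤ x) :
    |(∑' n : ℕ, if (⌊(x - h) / μ⌋).toNat + 1 ≤ n then
        (1 - ρ) * ρ ^ n * stdCdf (-(((x - (n : ℝ) * μ) / σ) / Real.sqrt (x / μ))) else 0)
      - normInt μ σ ρ x (Real.sqrt μ * h / Real.sqrt x)| ≤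
    σ / Real.sqrt (2 * Real.pi * μ) * Real.sqrt x / h * ρ ^ ((x - h) / μ) *
        Real.exp (-(μ * h ^ 2 / (2 * σ ^ 2 * x)))
      + (1 - ρ) * normInt μ σ ρ x (Real.sqrt μ * h / Real.sqrt x) := by
  set c := Real.sqrt (x / μ) with hc
  have hc0 : 0 < c := Real.sqrt_pos.2 (by positivity)
  set T := Real.sqrt μ * h / Real.sqrt x with hT
  have hsx : 0 < Real.sqrt x := Real.sqrt_pos.2 hx
  have hsμ : 0 < Real.sqrt μ := Real.sqrt_pos.2 hμ
  have hT0 : 0 < T := by rw [hT]; positivity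
  have hTc : T * c = h := by
    rw [hT, hc, Real.sqrt_div hx.le]
    field_simp
  set aF : ℝ → ℝ := fun z => (x - σ * z * c) / μ with haF
  set b := (x - h) / μ with hb
  have hb0 : 0 ≤ b := div_nonneg (by linarith) hμ.le
  set m0 : ℕ := (⌊b⌋).toNat with hm0
  have hm0cast : ((m0 : ℕ) : ℝ) = ((⌊b⌋ : ℤ) : ℝ) := by
    rw [hm0]
    exact_mod_cast congrArg (Int.cast : ℤ → ℝ) (Int.toNat_of_nonneg (Int.floor_nonneg.2 hb0))
  have hm0le : (m0 : ℝ) ≤ b := by rw [hm0cast]; exact Int.floor_le b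
  have hm0gt : b < (m0 : ℝ) + 1 := by rw [hm0cast]; exact Int.lt_floor_add_one b
  set E : Set ℝ := {z : ℝ | σ * z ≤ T} with hEdef
  have hEeq : E = Set.Iic (T / σ) := by
    ext z; simp [hEdef, Set.mem_Iic, le_div_iff₀ hσ, mul_comm]
  have hE : MeasurableSet E := by rw [hEeq]; exact measurableSet_Iic
  set u : ℕ → ℝ := fun n => (x - (n : ℝ) * μ) / (σ * c) with hu
  set N0 : ℝ → ℕ := fun z => max (m0 + 1) (⌈aF z⌉.toNat) with hN0
  have hceil : ∀ z : ℝ, aF z ≤ ((⌈aF z⌉.toNat : ℕ) : ℝ) := by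
    intro z
    calc aF z ≤ ((⌈aF z⌉ : ℤ) : ℝ) := Int.le_ceil _
      _ ≤ ((⌈aF z⌉.toNat : ℕ) : ℝ) := by exact_mod_cast Int.self_le_toNat _
  have hP1 : ∀ (z : ℝ) (n : ℕ), aF z ≤ (n : ℝ) ↔ u n ≤ z := by
    intro z n
    rw [haF, hu]
    simp only
    rw [div_le_iff₀ hμ, div_le_iff₀ (by positivity : (0:ℝ) < σ * c)]
    constructor <;> intro hle <;> nlinarith
  have hP2 : ∀ (z : ℝ) (n : ℕ), N0 z ≤ n ↔ (m0 + 1 ≤ n ∧ aF z ≤ (n : ℝ)) := by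
    intro z n
    rw [hN0]
    simp only [max_le_iff]
    constructor
    · rintro ⟨h1, h2⟩
      exact ⟨h1, (hceil z).trans (by exact_mod_cast h2)⟩
    · rintro ⟨h1, h2⟩
      refine ⟨h1, ?_⟩
      rw [Int.toNat_le, Int.ceil_le]
      exact_mod_cast h2
  have hP4 : ∀ z ∈ E, b ≤ aF z := by
    intro z hz
    have h2 : σ * z * c ≤ T * c := mul_le_mul_of_nonneg_right hz hc0.le
    rw [hTc] at h2
    show (x - h) / μ ≤ (x - σ * z * c) / μ
    gcongr
  have haFm : Measurable aF := by
    rw [haF]; fun_prop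
  have hGmeas : Measurable fun z => ρ ^ N0 z := by
    have h1 : Measurable fun z => ⌈aF z⌉ := haFm.ceil
    exact (measurable_from_top (f := fun i : ℤ => ρ ^ (max (m0 + 1) i.toNat))).comp h1
  have hGnonneg : ∀ z, 0 ≤ ρ ^ N0 z := fun z => pow_nonneg hρ0.le _
  have hGbd : ∀ z : ℝ, ‖ρ ^ N0 z‖ ≤ 1 := fun z => by
    rw [Real.norm_eq_abs, abs_of_nonneg (hGnonneg z)]
    exact pow_le_one₀ hρ0.le hρ1.le
  have hGint : Integrable (fun z => ρ ^ N0 z) (gaussianReal 0 1) :=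
    (integrable_const (1:ℝ)).mono' hGmeas.aestronglyMeasurable (ae_of_all _ hGbd)
  set F : ℕ → ℝ → ℝ := fun n => Set.indicator {z : ℝ | N0 z ≤ n} (fun _ => (1 - ρ) * ρ ^ n)
    with hF
  have hsetn : ∀ n : ℕ, {z : ℝ | N0 z ≤ n} = if m0 + 1 ≤ n then Set.Ici (u n) else ∅ := by
    intro n
    by_cases hn : m0 + 1 ≤ n
    · rw [if_pos hn]; ext z
      simp only [Set.mem_setOf_eq, Set.mem_Ici, hP2, hn, true_and, hP1]
    · rw [if_neg hn]; ext z
      simp only [Set.mem_setOf_eq, Set.mem_empty_iff_false, iff_false, hP2]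
      tauto
  have hFmeas : ∀ n : ℕ, MeasurableSet {z : ℝ | N0 z ≤ n} := by
    intro n; rw [hsetn n]
    split
    · exact measurableSet_Ici
    · exact MeasurableSet.empty
  have hFint : ∀ n : ℕ, Integrable (F n) (gaussianReal 0 1) := fun n =>
    (integrable_const _).indicator (hFmeas n)
  have hFval : ∀ n : ℕ, (∫ z, F n z ∂(gaussianReal 0 1)) =
      (if m0 + 1 ≤ n then (1 - ρ) * ρ ^ n * stdCdf (-(u n)) else 0) := by
    intro n
    rw [hF]
    simp only
    rw [integral_indicator (hFmeas n), setIntegral_const, smul_eq_mul, hsetn n]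
    by_cases hn : m0 + 1 ≤ n
    · rw [if_pos hn, if_pos hn, stdCdf_neg, mul_comm, measureReal_def]
    · rw [if_neg hn, if_neg hn]
      simp
  have hFnorm : ∀ n : ℕ, (∫ z, ‖F n z‖ ∂(gaussianReal 0 1)) ≤ (1 - ρ) * ρ ^ n := by
    intro n
    have hmulnn : (0:ℝ) ≤ (1 - ρ) * ρ ^ n := mul_nonneg (by linarith) (pow_nonneg hρ0.le n)
    have hbd : ∀ z : ℝ, ‖F n z‖ ≤ (1 - ρ) * ρ ^ n := by
      intro z
      rw [hF]
      simp only
      rw [Set.indicator_apply]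
      split
      · rw [Real.norm_eq_abs, abs_of_nonneg hmulnn]
      · simpa using hmulnn
    calc (∫ z, ‖F n z‖ ∂(gaussianReal 0 1)) ≤ ∫ _, (1 - ρ) * ρ ^ n ∂(gaussianReal 0 1) :=
          integral_mono (hFint n).norm (integrable_const _) hbd
      _ = (1 - ρ) * ρ ^ n := by simp
  have hsummable : Summable (fun n : ℕ => ∫ z, ‖F n z‖ ∂(gaussianReal 0 1)) :=
    Summable.of_nonneg_of_le (fun n => integral_nonneg fun z => norm_nonneg _) hFnorm
      ((summable_geometric_of_lt_one hρ0.le hρ1).mul_left (1 - ρ))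
  have hswap := MeasureTheory.integral_tsum_of_summable_integral_norm hFint hsummable
  have hptsum : ∀ z : ℝ, (∑' n : ℕ, F n z) = ρ ^ N0 z := by
    intro z
    have heq : ∀ n : ℕ, F n z = if N0 z ≤ n then (1 - ρ) * ρ ^ n else 0 := by
      intro n
      rw [hF]; simp only [Set.indicator_apply, Set.mem_setOf_eq]
    rw [tsum_congr heq]
    exact (hasSum_tail_geom hρ0.le hρ1 (N0 z)).tsum_eq
  have hS : (∑' n : ℕ, if m0 + 1 ≤ n then
        (1 - ρ) * ρ ^ n * stdCdf (-(((x - (n : ℝ) * μ) / σ) / c)) else 0)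
      = ∫ z, ρ ^ N0 z ∂(gaussianReal 0 1) := by
    have h1 : ∀ n : ℕ, (if m0 + 1 ≤ n then
        (1 - ρ) * ρ ^ n * stdCdf (-(((x - (n : ℝ) * μ) / σ) / c)) else 0)
        = ∫ z, F n z ∂(gaussianReal 0 1) := by
      intro n
      rw [hFval n, hu]
      simp only [div_div]
    rw [tsum_congr h1, hswap]
    exact integral_congr_ae (ae_of_all _ hptsum)
  have hIdef : normInt μ σ ρ x T = ∫ z in E, ρ ^ (aF z) ∂(gaussianReal 0 1) := rfl
  have haCont : Continuous fun z => ρ ^ (aF z) := by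
    have heq : (fun z => ρ ^ (aF z)) = fun z => Real.exp (Real.log ρ * aF z) := by
      funext z; rw [Real.rpow_def_of_pos hρ0]
    rw [heq, haF]
    fun_prop
  have haInt : IntegrableOn (fun z => ρ ^ (aF z)) E (gaussianReal 0 1) := by
    refine Integrable.mono' (integrable_const ((ρ:ℝ) ^ b)) haCont.aestronglyMeasurable.restrict ?_
    refine (ae_restrict_iff' hE).2 (ae_of_all _ fun z hz => ?_)
    rw [Real.norm_eq_abs, abs_of_nonneg (Real.rpow_nonneg hρ0.le _)]
    exact Real.rpow_le_rpow_of_exponent_ge hρ0 hρ1.le (hP4 z hz)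
  have hcompare : ∀ z ∈ E, |ρ ^ N0 z - ρ ^ (aF z)| ≤ (1 - ρ) * ρ ^ (aF z) := by
    intro z hz
    have haN : aF z ≤ (N0 z : ℝ) := by
      refine (hceil z).trans ?_
      exact_mod_cast Nat.cast_le.2 (le_max_right (m0 + 1) _)
    have hNa : (N0 z : ℝ) ≤ aF z + 1 := by
      rw [hN0]
      simp only
      rw [Nat.cast_max]
      refine max_le ?_ ?_
      · push_cast
        have := hP4 z hz
        linarith [hm0gt]
      · have h0 : (0:ℝ) ≤ aF z := hb0.trans (hP4 z hz)
        have h1 : (0:ℤ) ≤ ⌈aF z⌉ := Int.ceil_nonneg h0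
        have h2 : ((⌈aF z⌉.toNat : ℕ) : ℝ) = ((⌈aF z⌉ : ℤ) : ℝ) := by
          exact_mod_cast congrArg (Int.cast : ℤ → ℝ) (Int.toNat_of_nonneg h1)
        rw [h2]
        linarith [Int.ceil_lt_add_one (aF z)]
    have hnat : (ρ:ℝ) ^ N0 z = ρ ^ ((N0 z : ℕ) : ℝ) := (Real.rpow_natCast ρ (N0 z)).symm
    have hup : (ρ:ℝ) ^ N0 z ≤ ρ ^ (aF z) := by
      rw [hnat]
      exact Real.rpow_le_rpow_of_exponent_ge hρ0 hρ1.le haN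
    have hlo : ρ ^ (aF z) * ρ ≤ (ρ:ℝ) ^ N0 z := by
      rw [hnat]
      have := Real.rpow_le_rpow_of_exponent_ge hρ0 hρ1.le hNa
      rwa [Real.rpow_add hρ0, Real.rpow_one] at this
    rw [abs_of_nonpos (by linarith)]
    linarith
  have hsplit : (∫ z, ρ ^ N0 z ∂(gaussianReal 0 1))
      = (∫ z in E, ρ ^ N0 z ∂(gaussianReal 0 1)) + ∫ z in Eᶜ, ρ ^ N0 z ∂(gaussianReal 0 1) :=
    (integral_add_compl hE hGint).symm
  have hterm1 : |(∫ z in E, ρ ^ N0 z ∂(gaussianReal 0 1)) - normInt μ σ ρ x T|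
      ≤ (1 - ρ) * normInt μ σ ρ x T := by
    rw [hIdef, ← integral_sub hGint.integrableOn haInt]
    calc |∫ z in E, (ρ ^ N0 z - ρ ^ (aF z)) ∂(gaussianReal 0 1)|
        = ‖∫ z in E, (ρ ^ N0 z - ρ ^ (aF z)) ∂(gaussianReal 0 1)‖ := (Real.norm_eq_abs _).symm
      _ ≤ ∫ z in E, ‖ρ ^ N0 z - ρ ^ (aF z)‖ ∂(gaussianReal 0 1) :=
          norm_integral_le_integral_norm _
      _ = ∫ z in E, |ρ ^ N0 z - ρ ^ (aF z)| ∂(gaussianReal 0 1) := by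
          simp [Real.norm_eq_abs]
      _ ≤ ∫ z in E, (1 - ρ) * ρ ^ (aF z) ∂(gaussianReal 0 1) := by
          refine setIntegral_mono_on (hGint.integrableOn.sub haInt).abs (haInt.const_mul _) hE ?_
          exact hcompare
      _ = (1 - ρ) * ∫ z in E, ρ ^ (aF z) ∂(gaussianReal 0 1) := integral_const_mul _ _
  have hterm2 : (∫ z in Eᶜ, ρ ^ N0 z ∂(gaussianReal 0 1))
      ≤ ρ ^ b * ((gaussianReal 0 1 (Set.Ioi (T / σ))).toReal) := by
    have hbd2 : ∀ z ∈ Eᶜ, ρ ^ N0 z ≤ (ρ:ℝ) ^ b := by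
      intro z _
      have h1 : (ρ:ℝ) ^ N0 z ≤ ρ ^ ((m0 : ℝ) + 1) := by
        rw [(Real.rpow_natCast ρ (N0 z)).symm]
        refine Real.rpow_le_rpow_of_exponent_ge hρ0 hρ1.le ?_
        push_cast
        exact_mod_cast Nat.cast_le.2 (le_max_left (m0 + 1) (⌈aF z⌉.toNat))
      refine h1.trans (Real.rpow_le_rpow_of_exponent_ge hρ0 hρ1.le hm0gt.le)
    calc (∫ z in Eᶜ, ρ ^ N0 z ∂(gaussianReal 0 1))
        ≤ ∫ _ in Eᶜ, (ρ:ℝ) ^ b ∂(gaussianReal 0 1) := by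
          refine setIntegral_mono_on hGint.integrableOn integrableOn_const hE.compl hbd2
      _ = ((gaussianReal 0 1) Eᶜ).toReal * ρ ^ b := by rw [setIntegral_const, smul_eq_mul, measureReal_def]
      _ = ρ ^ b * ((gaussianReal 0 1 (Set.Ioi (T / σ))).toReal) := by
          rw [hEeq, Set.compl_Iic, mul_comm]
  have hterm2' : |∫ z in Eᶜ, ρ ^ N0 z ∂(gaussianReal 0 1)|
      ≤ ρ ^ b * ((gaussianReal 0 1 (Set.Ioi (T / σ))).toReal) := by
    rw [abs_of_nonneg (setIntegral_nonneg hE.compl fun z _ => hGnonneg z)]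
    exact hterm2
  have hTσ : 0 < T / σ := by positivity
  have htail := gauss_tail hTσ
  have hexp : -(T / σ) ^ 2 / 2 = -(μ * h ^ 2 / (2 * σ ^ 2 * x)) := by
    rw [hT]
    rw [div_pow, div_pow, mul_pow, Real.sq_sqrt hμ.le, Real.sq_sqrt hx.le]
    field_simp
  have hfinal_eq : ρ ^ b * (Real.exp (-(T / σ) ^ 2 / 2) / (T / σ * Real.sqrt (2 * Real.pi)))
      = σ / Real.sqrt (2 * Real.pi * μ) * Real.sqrt x / h * ρ ^ b *
        Real.exp (-(μ * h ^ 2 / (2 * σ ^ 2 * x))) := by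
    rw [hexp, Real.sqrt_mul (by positivity : (0:ℝ) ≤ 2 * Real.pi) μ, hT]
    have hsq : 0 < Real.sqrt (2 * Real.pi) := Real.sqrt_pos.2 (by positivity)
    field_simp
  calc |(∑' n : ℕ, if m0 + 1 ≤ n then
        (1 - ρ) * ρ ^ n * stdCdf (-(((x - (n : ℝ) * μ) / σ) / c)) else 0)
      - normInt μ σ ρ x T|
      = |((∫ z in E, ρ ^ N0 z ∂(gaussianReal 0 1)) - normInt μ σ ρ x T)
          + ∫ z in Eᶜ, ρ ^ N0 z ∂(gaussianReal 0 1)| := by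
        rw [hS, hsplit]; ring_nf
    _ ≤ |(∫ z in E, ρ ^ N0 z ∂(gaussianReal 0 1)) - normInt μ σ ρ x T|
          + |∫ z in Eᶜ, ρ ^ N0 z ∂(gaussianReal 0 1)| := abs_add_le _ _
    _ ≤ (1 - ρ) * normInt μ σ ρ x T
          + ρ ^ b * ((gaussianReal 0 1 (Set.Ioi (T / σ))).toReal) := by
        exact add_le_add hterm1 hterm2'
    _ ≤ (1 - ρ) * normInt μ σ ρ x T
          + ρ ^ b * (Real.exp (-(T / σ) ^ 2 / 2) / (T / σ * Real.sqrt (2 * Real.pi))) := by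
        refine add_le_add le_rfl (mul_le_mul_of_nonneg_left htail ?_)
        exact Real.rpow_nonneg hρ0.le b
    _ = σ / Real.sqrt (2 * Real.pi * μ) * Real.sqrt x / h * ρ ^ b *
          Real.exp (-(μ * h ^ 2 / (2 * σ ^ 2 * x)))
        + (1 - ρ) * normInt μ σ ρ x T := by
        rw [hfinal_eq]; ring

end AuxLemmas

/-- Lemma 12 (bound on `E₂`): with `h_κ(x) = ω₁⁻¹(x)` if `κ = 2`,
`h_κ(x) = √(x log x)` if `κ > 2`, there is `C > 0` such that for all large `x`
and all `ρ ∈ (0,1)`,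
`E₂(ρ,x) ≤ (C√x/h_κ(x)) ρ^{(x−h_κ(x))/μ} e^{−μh_κ(x)²/(2σ²x)}
  + (1−ρ) E[ρ^{a(x,Z)} 1(σZ ≤ √μ h_κ(x)/√x)]`. -/
theorem stmt16
    {Ω : Type} [MeasurableSpace Ω] (P : MeasureTheory.Measure Ω) [IsProbabilityMeasure P]
    (X : ℕ → Ω → ℝ) (hXmeas : ∀ i, Measurable (X i))
    (hXindep : iIndepFun X P)
    (hXident : ∀ i, IdentDistrib (X i) (X 0) P P)
    (hXpos : ∀ᵐ ω ∂P, 0 ≤ X 0 ω)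
    (Fbar : ℝ → ℝ) (hFbar : ∀ x : ℝ, Fbar x = (P {ω | x < X 0 ω}).toReal)
    (hsubexp : Tendsto (fun x : ℝ => (P {ω | x < X 0 ω + X 1 ω}).toReal / Fbar x)
      atTop (nhds 2))
    (Q : ℝ → ℝ) (hQdef : ∀ t : ℝ, Q t = -Real.log (Fbar t))
    (q : ℝ → ℝ) (hq : ∀ t : ℝ, Q t = ∫ s in (0:ℝ)..t, q s)
    (r : ℝ)
    (hr : Filter.limsup (fun t : ℝ => ((t * q t / Q t : ℝ) : EReal)) atTop = (r : EReal))
    (hr0 : 0 ≤ r) (hr1 : r < 1)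
    (hliminf : ((if r = 0 then (2 : ℝ) else 4 / (1 - r)) : EReal) <
        Filter.liminf (fun t : ℝ => ((t * q t : ℝ) : EReal)) atTop)
    (μ : ℝ) (hμ : μ = ∫ ω, X 0 ω ∂P) (hμpos : 0 < μ)
    (σ : ℝ) (hσ : σ ^ 2 = ∫ ω, (X 0 ω - μ) ^ 2 ∂P) (hσpos : 0 < σ)
    (κ : ℕ) (hκ : κ = kappaOf Q)
    (γ : ℕ → ℝ)
    (hγ : ∀ n, 1 ≤ n → γ n = (∫ ω, ((X 0 ω - μ) / σ) ^ n ∂P) -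
        ∑ k ∈ Finset.Icc 1 (n - 1),
          ((n - 1).choose (k - 1) : ℝ) * γ k * (∫ ω, ((X 0 ω - μ) / σ) ^ (n - k) ∂P))
    (lam : ℕ → ℝ) (hlam2 : lam 2 = -1) (hlam : ∀ j, 3 ≤ j → lam j = cramerCoeff γ j)
    :
    ∃ C : ℝ, 0 < C ∧ ∀ᶠ x : ℝ in atTop, ∀ ρ : ℝ, ρ ∈ Set.Ioo (0 : ℝ) 1 →
      E2fun Q lam κ μ σ ρ x ≤
        C * Real.sqrt x / hkFun Q κ x * ρ ^ ((x - hkFun Q κ x) / μ) *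
          Real.exp (-(μ * hkFun Q κ x ^ 2 / (2 * σ ^ 2 * x))) +
        (1 - ρ) * normInt μ σ ρ x (Real.sqrt μ * hkFun Q κ x / Real.sqrt x) := by
  have hCpos : 0 < σ / Real.sqrt (2 * Real.pi * μ) := by
    apply div_pos hσpos
    apply Real.sqrt_pos.2
    positivity
  refine ⟨σ / Real.sqrt (2 * Real.pi * μ), hCpos, ?_⟩
  by_cases hκ2 : κ = 2
  · -- κ = 2
    subst hκ2
    -- basic facts about Fbar and Q
    have hFpos : ∀ t : ℝ, 0 < Fbar t := by
      intro t
      by_contra hle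
      push_neg at hle
      have hF0 : Fbar t = 0 := le_antisymm hle (by rw [hFbar]; exact ENNReal.toReal_nonneg)
      have hnull0 : P {ω | t < X 0 ω} = 0 := by
        rw [hFbar] at hF0
        have hne : P {ω | t < X 0 ω} ≠ ⊤ := measure_ne_top _ _
        exact ((ENNReal.toReal_eq_zero_iff _).1 hF0).resolve_right hne
      have hnull1 : P {ω | t < X 1 ω} = 0 := by
        calc P {ω | t < X 1 ω} = P {ω | t < X 0 ω} :=
              (hXident 1).measure_mem_eq (measurableSet_Ioi (a := t))
          _ = 0 := hnull0
      have hev : ∀ᶠ x : ℝ in atTop,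
          (P {ω | x < X 0 ω + X 1 ω}).toReal / Fbar x = 0 := by
        filter_upwards [eventually_ge_atTop (2 * t)] with x hx
        have hsub : {ω | x < X 0 ω + X 1 ω} ⊆ {ω | t < X 0 ω} ∪ {ω | t < X 1 ω} := by
          intro ω hω
          simp only [Set.mem_setOf_eq] at hω
          by_contra hcon
          simp only [Set.mem_union, Set.mem_setOf_eq, not_or, not_lt] at hcon
          obtain ⟨h1, h2⟩ := hcon
          linarith
        have hnum : P {ω | x < X 0 ω + X 1 ω} = 0 :=
          measure_mono_null hsub (measure_union_null hnull0 hnull1)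
        rw [hnum]; simp
      have h20 : (2 : ℝ) = 0 :=
        tendsto_nhds_unique hsubexp ((tendsto_congr' hev).2 tendsto_const_nhds)
      norm_num at h20
    have hFle1 : ∀ t : ℝ, Fbar t ≤ 1 := by
      intro t
      rw [hFbar]
      have h1 : P {ω | t < X 0 ω} ≤ 1 := prob_le_one
      calc (P {ω | t < X 0 ω}).toReal ≤ (1 : ℝ≥0∞).toReal :=
            ENNReal.toReal_mono (by simp) h1
        _ = 1 := by simp
    have hFanti : ∀ s t : ℝ, s ≤ t → Fbar t ≤ Fbar s := by
      intro s t hst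
      rw [hFbar, hFbar]
      refine ENNReal.toReal_mono (measure_ne_top _ _) (measure_mono ?_)
      intro ω hω
      exact lt_of_le_of_lt hst hω
    have hQmono : ∀ s t : ℝ, s ≤ t → Q s ≤ Q t := by
      intro s t hst
      rw [hQdef, hQdef]
      have := Real.log_le_log (hFpos t) (hFanti s t hst)
      linarith
    have hQnonneg : ∀ t : ℝ, 0 ≤ Q t := by
      intro t
      rw [hQdef]
      have := Real.log_nonpos (hFpos t).le (hFle1 t)
      linarith
    obtain ⟨s₀, hs₀⟩ : ∃ s : ℝ, Fbar s < 1 := by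
      by_contra hcon
      push_neg at hcon
      have hone : ∀ s : ℝ, P {ω | s < X 0 ω} = 1 := by
        intro s
        have h1 : Fbar s = 1 := le_antisymm (hFle1 s) (hcon s)
        rw [hFbar] at h1
        have hne := measure_ne_top P {ω | s < X 0 ω}
        rw [← ENNReal.ofReal_toReal hne, h1, ENNReal.ofReal_one]
      have hcompl : ∀ n : ℕ, P ({ω | (n : ℝ) < X 0 ω}ᶜ) = 0 := by
        intro n
        have hms : MeasurableSet {ω | (n : ℝ) < X 0 ω} :=
          measurableSet_lt measurable_const (hXmeas 0)
        rw [measure_compl hms (measure_ne_top _ _), hone, measure_univ]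
        simp
      have huniv : (⋃ n : ℕ, ({ω | (n : ℝ) < X 0 ω}ᶜ)) = Set.univ := by
        ext ω
        simp only [Set.mem_iUnion, Set.mem_compl_iff, Set.mem_setOf_eq, Set.mem_univ,
          iff_true, not_lt]
        exact exists_nat_ge (X 0 ω)
      have h0 : P (⋃ n : ℕ, ({ω | (n : ℝ) < X 0 ω}ᶜ)) = 0 := measure_iUnion_null hcompl
      rw [huniv, measure_univ] at h0
      exact one_ne_zero h0
    set t₁ := max s₀ 1 with ht₁def
    have ht₁1 : (1:ℝ) ≤ t₁ := le_max_right _ _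
    have hQpos : ∀ t : ℝ, t₁ ≤ t → 0 < Q t := by
      intro t ht
      rw [hQdef]
      have h1 : Fbar t < 1 :=
        lt_of_le_of_lt (hFanti s₀ t (le_trans (le_max_left _ _) ht)) hs₀
      have := Real.log_neg (hFpos t) h1
      linarith
    have hIntAll : ∀ t : ℝ, t₁ ≤ t → IntervalIntegrable q volume 0 t := by
      intro t ht
      by_contra hni
      have h0 := intervalIntegral.integral_undef hni
      rw [← hq t] at h0
      exact absurd h0 (ne_of_gt (hQpos t ht))
    have hint' : ∀ s t : ℝ, t₁ ≤ s → s ≤ t → IntervalIntegrable q volume s t := by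
      intro s t hs hst
      refine (hIntAll t (hs.trans hst)).mono_set ?_
      rw [Set.uIcc_of_le (by linarith : s ≤ t),
        Set.uIcc_of_le (by linarith : (0:ℝ) ≤ t)]
      exact Set.Icc_subset_Icc (by linarith) le_rfl
    have hsum' : ∀ s t : ℝ, t₁ ≤ s → s ≤ t → Q t = Q s + ∫ u in s..t, q u := by
      intro s t hs hst
      have h1 := intervalIntegral.integral_add_adjacent_intervals (a := (0:ℝ)) (b := s)
        (c := t) (hIntAll s hs) (hint' s t hs hst)
      rw [hq t, hq s, ← h1]
    set r2 : ℝ := (1 + r) / 2 with hr2def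
    have hr2a : r < r2 := by rw [hr2def]; linarith
    have hr2b : r2 < 1 := by rw [hr2def]; linarith
    have hr2c : 0 < r2 := by rw [hr2def]; linarith
    have hlim : Filter.limsup (fun t : ℝ => ((t * q t / Q t : ℝ) : EReal)) atTop
        < ((r2 : ℝ) : EReal) := by
      rw [hr]
      exact_mod_cast hr2a
    have hev2 : ∀ᶠ t : ℝ in atTop, t * q t ≤ r2 * Q t := by
      have h1 := Filter.eventually_lt_of_limsup_lt hlim
      filter_upwards [h1, eventually_ge_atTop t₁] with t h2 h3
      have h4 : t * q t / Q t < r2 := by exact_mod_cast h2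
      have h5 := hQpos t h3
      rw [div_lt_iff₀ h5] at h4
      linarith
    obtain ⟨t₂, ht₂⟩ := eventually_atTop.1 hev2
    set t₀ := max t₁ t₂ with ht₀def
    have hQsub : ∀ᶠ x : ℝ in atTop, Q x ≤ x := by
      refine Q_sub_linear Q q t₀ r2 (le_trans ht₁1 (le_max_left _ _)) hr2c hr2b
        (hQpos t₀ (le_max_left _ _)) (fun t _ => hQnonneg t)
        (fun s t _ hst => hQmono s t hst)
        (fun s t hs hst => hsum' s t (le_trans (le_max_left _ _) hs) hst)
        (fun s t hs hst => hint' s t (le_trans (le_max_left _ _) hs) hst)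
        (fun t ht => ht₂ t (le_trans (le_max_right _ _) ht))
    filter_upwards [hQsub, eventually_ge_atTop (2:ℝ)] with x hQx hx2
    rintro ρ ⟨hρ0, hρ1⟩
    have hx0 : (0:ℝ) < x := by linarith
    set h := rInv (omega1 Q) x with hhdef
    have hxS : x ∈ {u : ℝ | 0 ≤ u ∧ x ≤ omega1 Q u} := by
      refine ⟨hx0.le, ?_⟩
      have hm : max (Q x) 1 ≤ x := max_le hQx (by linarith)
      have hmpos : (0:ℝ) < max (Q x) 1 := lt_of_lt_of_le zero_lt_one (le_max_right _ _)
      rw [omega1, le_div_iff₀ hmpos]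
      nlinarith
    have hbdd : BddBelow {u : ℝ | 0 ≤ u ∧ x ≤ omega1 Q u} := ⟨0, fun u hu => hu.1⟩
    have hhx : h ≤ x := csInf_le hbdd hxS
    have hlb : ∀ u ∈ {u : ℝ | 0 ≤ u ∧ x ≤ omega1 Q u}, Real.sqrt x ≤ u := by
      intro u hu
      have h1 : x ≤ u ^ 2 / max (Q u) 1 := hu.2
      have h2 : u ^ 2 / max (Q u) 1 ≤ u ^ 2 :=
        div_le_self (sq_nonneg u) (le_max_right _ _)
      have h3 : x ≤ u ^ 2 := le_trans h1 h2
      calc Real.sqrt x ≤ Real.sqrt (u ^ 2) := Real.sqrt_le_sqrt h3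
        _ = u := Real.sqrt_sq hu.1
    have hh0 : 0 < h :=
      lt_of_lt_of_le (Real.sqrt_pos.2 hx0) (le_csInf ⟨x, hxS⟩ hlb)
    have hkey := key_bound μ σ ρ x h hμpos hσpos hρ0 hρ1 hx0 hh0 hhx
    simp only [E2fun, Mfun, hkFun, piHat, if_true, eq_self_iff_true, ← hhdef]
    exact hkey
  · -- κ ≠ 2
    filter_upwards [eventually_ge_atTop (2:ℝ)] with x hx2
    rintro ρ ⟨hρ0, hρ1⟩
    have hx0 : (0:ℝ) < x := by linarith
    have hlog : 0 < Real.log x := Real.log_pos (by linarith)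
    set h := Real.sqrt (x * Real.log x) with hhdef
    have hh0 : 0 < h := Real.sqrt_pos.2 (by positivity)
    have hhx : h ≤ x := by
      have h1 : x * Real.log x ≤ x ^ 2 := by
        nlinarith [Real.log_le_sub_one_of_pos hx0]
      calc h ≤ Real.sqrt (x ^ 2) := Real.sqrt_le_sqrt h1
        _ = x := Real.sqrt_sq hx0.le
    have hTeq : Real.sqrt (μ * Real.log x) = Real.sqrt μ * h / Real.sqrt x := by
      rw [hhdef, Real.sqrt_mul hx0.le, Real.sqrt_mul hμpos.le]
      have hsx : Real.sqrt x ≠ 0 := (Real.sqrt_pos.2 hx0).ne'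
      field_simp
    have hkey := key_bound μ σ ρ x h hμpos hσpos hρ0 hρ1 hx0 hh0 hhx
    have hNeq : Nfun μ x = (⌊(x - h) / μ⌋).toNat := by rw [Nfun, ← hhdef]
    have htsum : (∑' n : ℕ, if Nfun μ x + 1 ≤ n then
          (1 - ρ) * ρ ^ n * piHat lam κ μ σ x n else 0)
        = ∑' n : ℕ, if (⌊(x - h) / μ⌋).toNat + 1 ≤ n then
            (1 - ρ) * ρ ^ n *
              stdCdf (-(((x - (n : ℝ) * μ) / σ) / Real.sqrt (x / μ))) else 0 := by
      refine tsum_congr fun n => ?_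
      rw [hNeq]
      by_cases hn : (⌊(x - h) / μ⌋).toNat + 1 ≤ n
      · rw [if_pos hn, if_pos hn]
        congr 1
        rw [piHat, if_neg hκ2, if_pos (by rw [hNeq]; omega), if_neg (by rw [hNeq]; omega)]
        simp
      · rw [if_neg hn, if_neg hn]
    simp only [E2fun, if_neg hκ2, hkFun, ← hhdef]
    rw [htsum, hTeq]
    exact hkey

end
end
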